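/- arXiv:1507.04820 — 11 statements merged into one kernel-verified Lean document; each statement's English description precedes it below -/
import Mathlib

section
/- For real numbers f and s with -0.1·x ≤ f ≤ 0.4·x, 0.4 ≤ s ≤ 1.6, and x > 0, we have f·(s-1)/s ≤ 0.15·x, with equality if and only if (f = 0.4·x and s = 1.6) or (f = -0.1·x and s = 0.4). -/
/-- Key inequality in the analysis of the generator FACTS choice network:
for `-0.1x ≤ f ≤ 0.4x` and `0.4 ≤ s ≤ 1.6` with `x > 0`,
`f·(s−1)/s ≤ 0.15·x`, with equality iff `(f,s) = (0.4x, 1.6)` or `(f,s) = (−0.1x, 0.4)`. -/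
theorem gfcn_key_inequality (x f s : ℝ) (hx : 0 < x)
    (hf1 : -(0.1 * x) ≤ f) (hf2 : f ≤ 0.4 * x)
    (hs1 : 0.4 ≤ s) (hs2 : s ≤ 1.6) :
    f * (s - 1) / s ≤ 0.15 * x ∧
      (f * (s - 1) / s = 0.15 * x ↔
        (f = 0.4 * x ∧ s = 1.6) ∨ (f = -(0.1 * x) ∧ s = 0.4)) := by
  have hs0 : (0:ℝ) < s := by linarith
  constructor
  · rw [div_le_iff₀ hs0]
    rcases le_or_gt 1 s with h1 | h1
    · nlinarith [mul_nonneg (by linarith : (0:ℝ) ≤ 0.4 * x - f) (by linarith : (0:ℝ) ≤ s - 1)]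
    · nlinarith [mul_nonneg (by linarith : (0:ℝ) ≤ f + 0.1 * x) (by linarith : (0:ℝ) ≤ 1 - s)]
  · rw [div_eq_iff hs0.ne']
    constructor
    · intro h
      rcases le_or_gt 1 s with h1 | h1
      · left
        have A : (0:ℝ) ≤ (0.4 * x - f) * (s - 1) :=
          mul_nonneg (by linarith) (by linarith)
        have B : x * (0.4 - 0.25 * s) = 0 := by nlinarith
        have hs' : s = 1.6 := by
          rcases mul_eq_zero.mp B with h' | h'
          · exact absurd h' hx.ne'
          · linarith
        have hf : f = 0.4 * x := by
          have C : (0.4 * x - f) * (s - 1) = 0 := by nlinarith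
          rcases mul_eq_zero.mp C with h' | h'
          · linarith
          · exfalso; rw [hs'] at h'; norm_num at h'
        exact ⟨hf, hs'⟩
      · right
        have A : (0:ℝ) ≤ (f + 0.1 * x) * (1 - s) :=
          mul_nonneg (by linarith) (by linarith)
        have B : x * (0.25 * s - 0.1) = 0 := by nlinarith
        have hs' : s = 0.4 := by
          rcases mul_eq_zero.mp B with h' | h'
          · exact absurd h' hx.ne'
          · linarith
        have hf : f = -(0.1 * x) := by
          have C : (f + 0.1 * x) * (1 - s) = 0 := by nlinarith
          rcases mul_eq_zero.mp C with h' | h'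
          · linarith
          · exfalso; rw [hs'] at h'; norm_num at h'
        exact ⟨hf, hs'⟩
    · rintro (⟨hf, hs⟩ | ⟨hf, hs⟩) <;> subst hf <;> subst hs <;> ring
end

section
/- Consider a graph on nodes {g, v, l} with edges g–v, g–l, v–l, each of susceptance 1, with capacities x, 2x, x respectively (x > 0). In the Linear DC model (flow on edge a–b equals susceptance times the phase-angle difference θ(b) − θ(a), flows bounded in absolute value by capacity, and Kirchhoff's conservation law at every node with generation at g and loads at v and l), allowing any subset of edges to be switched off, the maximum total generation at g equals 3x. -/
/-- The maximum switching flow of the generator switching choice network `GSCN(x,v)`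
(nodes g, v, l; edges g–v cap x, g–l cap 2x, v–l cap x, all susceptance 1;
generator at g, loads at v and l) equals `3x`.  A configuration is given by booleans
telling which edges are kept (not switched off), phase angles, flows, loads and the
generation at `g`. -/
theorem gscn_max_switching_flow (x : ℝ) (hx : 0 < x) :
    IsGreatest {G : ℝ |
      ∃ (bgv bgl bvl : Bool) (θg θv θl fgv fgl fvl Lv Ll : ℝ),
        (if bgv then fgv = θv - θg ∧ |fgv| ≤ x else fgv = 0) ∧
        (if bgl then fgl = θl - θg ∧ |fgl| ≤ 2 * x else fgl = 0) ∧
        (if bvl then fvl = θl - θv ∧ |fvl| ≤ x else fvl = 0) ∧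
        0 ≤ G ∧ 0 ≤ Lv ∧ 0 ≤ Ll ∧
        fgv + fgl = G ∧
        fvl - fgv = 0 - Lv ∧
        -fgl - fvl = 0 - Ll} (3 * x) := by
  constructor
  · refine ⟨true, true, true, 0, x, 2*x, x, 2*x, x, 0, 3*x, ?_⟩
    simp only [if_true]
    refine ⟨⟨by ring, by rw [abs_of_nonneg hx.le]⟩,
      ⟨by ring, by rw [abs_of_nonneg (by linarith : (0:ℝ) ≤ 2*x)]⟩,
      ⟨by ring, by rw [abs_of_nonneg hx.le]⟩,
      by linarith, le_refl _, by linarith, by ring, by ring, by ring⟩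
  · rintro G ⟨bgv, bgl, bvl, θg, θv, θl, fgv, fgl, fvl, Lv, Ll, h1, h2, h3,
      hG, hLv, hLl, hsum, hv, hl⟩
    have b1 : fgv ≤ x := by
      cases bgv <;> simp at h1
      · linarith
      · linarith [abs_le.mp h1.2]
    have b2 : fgl ≤ 2*x := by
      cases bgl <;> simp at h2
      · linarith
      · linarith [abs_le.mp h2.2]
    linarith
end

section
/- In the generator switching choice network GSCN(x,v) (nodes g, v, l; edges g–v with capacity x, g–l with capacity 2x, v–l with capacity x, all susceptance 1; generator at g, loads at v and l), the set of values of the load served at v over all optimal switching solutions (those achieving maximum generation 3x) is exactly {0, x}. -/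
/-- In the generator switching choice network `GSCN(x,v)`, the set of values of the
load served at `v` over all optimal switching solutions (those achieving the maximum
generation `3x`) is exactly `{0, x}`. -/
theorem gscn_optimal_load_values (x : ℝ) (hx : 0 < x) :
    {Lv : ℝ |
      ∃ (bgv bgl bvl : Bool) (θg θv θl fgv fgl fvl Ll : ℝ),
        (if bgv then fgv = θv - θg ∧ |fgv| ≤ x else fgv = 0) ∧
        (if bgl then fgl = θl - θg ∧ |fgl| ≤ 2 * x else fgl = 0) ∧
        (if bvl then fvl = θl - θv ∧ |fvl| ≤ x else fvl = 0) ∧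
        0 ≤ Lv ∧ 0 ≤ Ll ∧
        fgv + fgl = 3 * x ∧
        fvl - fgv = 0 - Lv ∧
        -fgl - fvl = 0 - Ll} = {0, x} := by
  ext Lv
  simp only [Set.mem_setOf_eq, Set.mem_insert_iff, Set.mem_singleton_iff]
  constructor
  · rintro ⟨bgv, bgl, bvl, θg, θv, θl, fgv, fgl, fvl, Ll, h1, h2, h3, hLv, hLl, hgen, hv, hl⟩
    cases bgv <;> cases bgl <;> cases bvl <;>
      simp only [Bool.false_eq_true, if_true, if_false, ite_true, ite_false] at h1 h2 h3
    · linarith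
    · linarith
    · exfalso; rw [abs_le] at h2; linarith [h2.2]
    · exfalso; rw [abs_le] at h2; linarith [h2.2]
    · exfalso; rw [abs_le] at h1; linarith [h1.2]
    · exfalso; rw [abs_le] at h1; linarith [h1.2]
    · -- bvl = false: fvl = 0, fgv = x
      obtain ⟨e1, a1⟩ := h1; obtain ⟨e2, a2⟩ := h2
      rw [abs_le] at a1 a2
      right; linarith [a1.2, a2.2]
    · -- all on: fvl = fgl - fgv
      obtain ⟨e1, a1⟩ := h1; obtain ⟨e2, a2⟩ := h2; obtain ⟨e3, a3⟩ := h3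
      rw [abs_le] at a1 a2 a3
      left
      have hfgv : fgv = x := by linarith [a1.2, a2.2]
      have hfvl : fvl = fgl - fgv := by rw [e1, e2, e3]; ring
      linarith [a1.2, a2.2]
  · rintro (rfl | rfl)
    · refine ⟨true, true, true, 0, x, 2*x, x, 2*x, x, 3*x, ?_, ?_, ?_, le_refl 0,
        by linarith, by ring, by ring, by ring⟩ <;>
        simp only [if_true] <;> constructor
      · ring
      · rw [abs_of_pos hx]
      · ring
      · rw [abs_of_pos (by linarith : (0:ℝ) < 2*x)]
      · ring
      · rw [abs_of_pos hx]
    · refine ⟨true, true, false, 0, Lv, 2*Lv, Lv, 2*Lv, 0, 2*Lv, ?_, ?_, ?_, by linarith,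
        by linarith, by ring, by ring, by ring⟩
      · simp only [if_true]
        exact ⟨by ring, by rw [abs_of_pos hx]⟩
      · simp only [if_true]
        refine ⟨by ring, by rw [abs_of_pos (by linarith : (0:ℝ) < 2*Lv)]⟩
      · simp
end

section
/- Let G = (V, E) be a graph with distinguished nodes a and b, |V| = n. In the LDC network obtained by giving every edge of G susceptance 1 and capacity 1, adding a generator node v₀ adjacent to a, a load node v_{n+1} adjacent to b (both new edges with susceptance 1, capacity 1), and adding a disjoint path v₀ = v₀', v₁', …, v_{n+1}' = v_{n+1} of n+1 edges each with susceptance 1 and capacity 1, the maximum switching flow (maximum generation over all subsets of deleted edges and feasible LDC solutions) equals 2 if and only if G has a Hamiltonian path from a to b. -/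
open Finset

/-- Nodes of the Hamiltonian-path reduction network: the nodes of the original
graph (`Sum.inl`), together with the auxiliary path nodes `v₀' = v₀, …, v_{n+1}' = v_{n+1}`
(`Sum.inr`); `Sum.inr 0` is the generator `v₀` and `Sum.inr (n+1)` is the load `v_{n+1}`. -/
abbrev HamNode (n : ℕ) := Fin n ⊕ Fin (n + 2)

/-- Oriented edges of the reduction network: the edges of `G` (oriented by `<`),
the edge `v₀–a`, the edge `b–v_{n+1}`, and the auxiliary path edges `vᵢ'–v_{i+1}'`.
All edges have susceptance 1 and capacity 1. -/
def hamIsEdge {n : ℕ} (G : SimpleGraph (Fin n)) [DecidableRel G.Adj] (a b : Fin n) :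
    HamNode n × HamNode n → Bool
  | (Sum.inl i, Sum.inl j) => decide (i < j ∧ G.Adj i j)
  | (Sum.inr i, Sum.inl j) => decide (i = 0 ∧ j = a)
  | (Sum.inl i, Sum.inr j) => decide (i = b ∧ j = Fin.last (n + 1))
  | (Sum.inr i, Sum.inr j) => decide ((j : ℕ) = (i : ℕ) + 1)

/-- Achievable total generations of the reduction network, over all choices of
switched-off edges `off` and all feasible LDC solutions `(θ, f, gen, load)`:
on every remaining edge `f = θ(head) − θ(tail)` and `|f| ≤ 1`, flows vanish off
the remaining edges, Kirchhoff's conservation law holds at every node, and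
generation (resp. load) is supported on `v₀` (resp. `v_{n+1}`). -/
def hamAchievable {n : ℕ} (G : SimpleGraph (Fin n)) [DecidableRel G.Adj]
    (a b : Fin n) : Set ℝ :=
  {T : ℝ | ∃ (off : Finset (HamNode n × HamNode n))
      (θ : HamNode n → ℝ) (f : HamNode n × HamNode n → ℝ)
      (gen load : HamNode n → ℝ),
    off ⊆ univ.filter (fun e => hamIsEdge G a b e = true) ∧
    (∀ e ∈ univ.filter (fun e => hamIsEdge G a b e = true) \ off,
        f e = θ e.2 - θ e.1 ∧ |f e| ≤ 1) ∧
    (∀ e ∉ univ.filter (fun e => hamIsEdge G a b e = true) \ off, f e = 0) ∧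
    (∀ z : HamNode n,
        (∑ e ∈ univ.filter (fun e => hamIsEdge G a b e = true) \ off,
          ((if e.1 = z then f e else 0) - (if e.2 = z then f e else 0)))
          = gen z - load z) ∧
    (∀ z, 0 ≤ gen z) ∧ (∀ z, 0 ≤ load z) ∧
    (∀ z, z ≠ Sum.inr 0 → gen z = 0) ∧
    (∀ z, z ≠ Sum.inr (Fin.last (n + 1)) → load z = 0) ∧
    T = ∑ z : HamNode n, gen z}

section helpers
variable {α : Type*} [Fintype α] [DecidableEq α]

lemma sum_single' (g : α → ℝ) (x : α) (h : ∀ y, y ≠ x → g y = 0) :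
    ∑ y, g y = g x :=
  Finset.sum_eq_single_of_mem x (mem_univ x) (fun y _ hy => h y hy)

lemma sum_pair' (g : α → ℝ) (x y : α) (hxy : x ≠ y)
    (h : ∀ z, z ≠ x → z ≠ y → g z = 0) : ∑ z, g z = g x + g y := by
  rw [← Finset.sum_pair hxy]
  refine (Finset.sum_subset (Finset.subset_univ _) ?_).symm
  intro z _ hz
  simp only [mem_insert, mem_singleton, not_or] at hz
  exact h z hz.1 hz.2

lemma sum_zero' (g : α → ℝ) (h : ∀ y, g y = 0) : ∑ y, g y = 0 :=
  Finset.sum_eq_zero fun y _ => h y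

lemma div_reform (f : α × α → ℝ) (S : Finset (α × α)) (hf : ∀ e ∉ S, f e = 0) (z : α) :
    ∑ e ∈ S, ((if e.1 = z then f e else 0) - (if e.2 = z then f e else 0))
      = ∑ w, f (z, w) - ∑ w, f (w, z) := by
  have hext : ∑ e ∈ S, ((if e.1 = z then f e else 0) - (if e.2 = z then f e else 0))
      = ∑ e : α × α, ((if e.1 = z then f e else 0) - (if e.2 = z then f e else 0)) := by
    refine Finset.sum_subset (Finset.subset_univ S) ?_
    intro e _ he
    rw [hf e he]; simp
  rw [hext, Finset.sum_sub_distrib]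
  congr 1
  · rw [Fintype.sum_prod_type, Finset.sum_eq_single_of_mem z (mem_univ z)]
    · simp
    · intro x _ hx
      exact Finset.sum_eq_zero fun y _ => if_neg hx
  · rw [Fintype.sum_prod_type_right, Finset.sum_eq_single_of_mem z (mem_univ z)]
    · simp
    · intro x _ hx
      exact Finset.sum_eq_zero fun y _ => if_neg hx

end helpers

variable {n : ℕ} (G : SimpleGraph (Fin n)) [DecidableRel G.Adj] (a b : Fin n)

lemma hamIsEdge_ll {i j : Fin n} :
    hamIsEdge G a b (Sum.inl i, Sum.inl j) = true ↔ i < j ∧ G.Adj i j := by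
  simp [hamIsEdge]

lemma hamIsEdge_rl {i : Fin (n+2)} {j : Fin n} :
    hamIsEdge G a b (Sum.inr i, Sum.inl j) = true ↔ i = 0 ∧ j = a := by
  simp [hamIsEdge]

lemma hamIsEdge_lr {i : Fin n} {j : Fin (n+2)} :
    hamIsEdge G a b (Sum.inl i, Sum.inr j) = true ↔ i = b ∧ j = Fin.last (n + 1) := by
  simp [hamIsEdge]

lemma hamIsEdge_rr {i j : Fin (n+2)} :
    hamIsEdge G a b (Sum.inr i, Sum.inr j) = true ↔ (j : ℕ) = (i : ℕ) + 1 := by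
  simp [hamIsEdge]

/-- The core extraction: from a feasible solution with total generation 2,
we get a Hamiltonian path. -/
lemma ham_path_of_mem (hn : 0 < n)
    (off : Finset (HamNode n × HamNode n)) (θ : HamNode n → ℝ)
    (f : HamNode n × HamNode n → ℝ) (gen load : HamNode n → ℝ)
    (h2 : ∀ e ∈ univ.filter (fun e => hamIsEdge G a b e = true) \ off,
        f e = θ e.2 - θ e.1 ∧ |f e| ≤ 1)
    (h3 : ∀ e ∉ univ.filter (fun e => hamIsEdge G a b e = true) \ off, f e = 0)
    (h4 : ∀ z : HamNode n,
        (∑ e ∈ univ.filter (fun e => hamIsEdge G a b e = true) \ off,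
          ((if e.1 = z then f e else 0) - (if e.2 = z then f e else 0)))
          = gen z - load z)
    (hload0 : ∀ z, 0 ≤ load z)
    (hgen : ∀ z, z ≠ Sum.inr 0 → gen z = 0)
    (hload : ∀ z, z ≠ Sum.inr (Fin.last (n + 1)) → load z = 0)
    (hT : (2:ℝ) = ∑ z : HamNode n, gen z) :
    ∃ p : G.Walk a b, p.IsHamiltonian := by
  set S := univ.filter (fun e => hamIsEdge G a b e = true) \ off with hS
  -- basic facts about f
  have hfP : ∀ e, f e ≠ 0 → hamIsEdge G a b e = true ∧ f e = θ e.2 - θ e.1 := by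
    intro e hfe
    by_cases he : e ∈ S
    · have hedge := (Finset.mem_sdiff.1 he).1
      exact ⟨(Finset.mem_filter.1 hedge).2, (h2 e he).1⟩
    · exact absurd (h3 e he) hfe
  have habs : ∀ e, |f e| ≤ 1 := by
    intro e
    by_cases he : e ∈ S
    · exact (h2 e he).2
    · rw [h3 e he]; simp
  have hf_le : ∀ e, f e ≤ 1 := fun e => (abs_le.1 (habs e)).2
  have hdiv : ∀ z, ∑ w, f (z, w) - ∑ w, f (w, z) = gen z - load z := by
    intro z
    rw [← div_reform f S (fun e he => h3 e he) z]
    exact h4 z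
  -- generation is 2 at the generator
  have hgen2 : gen (Sum.inr 0) = 2 := by
    rw [hT]
    exact (sum_single' gen (Sum.inr 0) hgen).symm
  -- total load is 2
  have hloadtot : load (Sum.inr (Fin.last (n+1))) = 2 := by
    have h0 : ∑ z : HamNode n, (gen z - load z) = 0 := by
      have : ∀ z : HamNode n, gen z - load z = ∑ w, f (z, w) - ∑ w, f (w, z) :=
        fun z => (hdiv z).symm
      rw [Finset.sum_congr rfl (fun z _ => this z), Finset.sum_sub_distrib]
      rw [Finset.sum_comm]
      ring
    rw [Finset.sum_sub_distrib] at h0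
    have hlt : ∑ z : HamNode n, load z = 2 := by
      have := sum_single' load (Sum.inr (Fin.last (n+1))) hload
      rw [← hT] at h0
      linarith [this]
    rw [← hlt]
    exact (sum_single' load (Sum.inr (Fin.last (n+1))) hload).symm
  -- the generator node
  have h1lt : (1 : ℕ) < n + 2 := by omega
  have hzero_ne_last : (0 : Fin (n+2)) ≠ Fin.last (n+1) := by
    simp [Fin.ext_iff]
  have hload_at0 : load (Sum.inr 0) = 0 := by
    apply hload
    simp [hzero_ne_last]
  have hout0 : ∑ w, f (Sum.inr 0, w)
      = f (Sum.inr 0, Sum.inl a) + f (Sum.inr 0, Sum.inr ⟨1, h1lt⟩) := by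
    apply sum_pair' (fun w => f (Sum.inr 0, w)) (Sum.inl a) (Sum.inr ⟨1, h1lt⟩) (by simp)
    intro w hw1 hw2
    by_contra hne
    obtain ⟨hedge, -⟩ := hfP _ hne
    cases w with
    | inl u =>
      rw [hamIsEdge_rl] at hedge
      exact hw1 (by rw [hedge.2])
    | inr j =>
      rw [hamIsEdge_rr] at hedge
      simp only [Fin.val_zero] at hedge
      exact hw2 (by rw [show j = ⟨1, h1lt⟩ from Fin.ext hedge])
  have hin0 : ∑ w, f (w, Sum.inr 0) = 0 := by
    apply sum_zero'
    intro w
    by_contra hne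
    obtain ⟨hedge, -⟩ := hfP _ hne
    cases w with
    | inl u =>
      rw [hamIsEdge_lr] at hedge
      exact hzero_ne_last hedge.2
    | inr j =>
      rw [hamIsEdge_rr] at hedge
      simp at hedge
  have hfa : f (Sum.inr 0, Sum.inl a) = 1 ∧ f (Sum.inr 0, Sum.inr ⟨1, h1lt⟩) = 1 := by
    have hd := hdiv (Sum.inr 0)
    rw [hout0, hin0, hgen2, hload_at0] at hd
    constructor <;>
      linarith [hf_le (Sum.inr 0, Sum.inl a), hf_le (Sum.inr 0, Sum.inr ⟨1, h1lt⟩)]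
  -- the auxiliary path carries flow 1 on every edge
  have haux : ∀ k (hk : k + 1 ≤ n + 1),
      f (Sum.inr ⟨k, by omega⟩, Sum.inr ⟨k+1, by omega⟩) = 1 := by
    intro k
    induction k with
    | zero =>
      intro hk
      have h0 : (0 : Fin (n+2)) = ⟨0, by omega⟩ := by
        simp [Fin.ext_iff]
      rw [← h0]
      exact hfa.2
    | succ k ih =>
      intro hk
      have hik := ih (by omega)
      -- Kirchhoff at the node k+1 of the auxiliary path
      set z : HamNode n := Sum.inr ⟨k+1, by omega⟩ with hz
      have hgenz : gen z = 0 := by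
        apply hgen
        simp [hz, Fin.ext_iff]
      have hloadz : load z = 0 := by
        apply hload
        simp only [hz, ne_eq, Sum.inr.injEq, Fin.ext_iff, Fin.val_last]
        omega
      have hout : ∑ w, f (z, w) = f (Sum.inr ⟨k+1, by omega⟩, Sum.inr ⟨k+2, by omega⟩) := by
        apply sum_single'
        intro w hw
        by_contra hne
        obtain ⟨hedge, -⟩ := hfP _ hne
        cases w with
        | inl u =>
          rw [hamIsEdge_rl] at hedge
          have := hedge.1
          simp [Fin.ext_iff] at this
        | inr j =>
          rw [hamIsEdge_rr] at hedge
          simp only at hedge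
          exact hw (by rw [show j = ⟨k+2, by omega⟩ from Fin.ext hedge])
      have hin : ∑ w, f (w, z) = f (Sum.inr ⟨k, by omega⟩, Sum.inr ⟨k+1, by omega⟩) := by
        apply sum_single'
        intro w hw
        by_contra hne
        obtain ⟨hedge, -⟩ := hfP _ hne
        cases w with
        | inl u =>
          rw [hamIsEdge_lr] at hedge
          have := hedge.2
          rw [Fin.ext_iff] at this
          simp only [Fin.val_last] at this
          omega
        | inr j =>
          rw [hamIsEdge_rr] at hedge
          simp only [hz, Fin.val_mk] at hedge
          exact hw (by
            rw [show j = ⟨k, by omega⟩ from Fin.ext (by simp only [Fin.val_mk]; omega)])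
      have hd := hdiv z
      rw [hout, hin, hgenz, hloadz, hik] at hd
      linarith
  -- θ increases by 1 along the auxiliary path
  have hθaux : ∀ k (hk : k ≤ n + 1), θ (Sum.inr ⟨k, by omega⟩) = θ (Sum.inr ⟨0, by omega⟩) + k := by
    intro k
    induction k with
    | zero => intro _; simp
    | succ k ih =>
      intro hk
      have h1 := haux k (by omega)
      have hne : f (Sum.inr ⟨k, by omega⟩, Sum.inr ⟨k+1, by omega⟩) ≠ 0 := by
        rw [h1]; norm_num
      obtain ⟨-, hθe⟩ := hfP _ hne
      simp only at hθe
      rw [h1] at hθe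
      have := ih (by omega)
      push_cast
      rw [show θ (Sum.inr ⟨k+1, by omega⟩) = θ (Sum.inr ⟨k, by omega⟩) + 1 by linarith, this]
      push_cast
      ring
  -- the load node
  have hnlt : (n : ℕ) < n + 2 := by omega
  have hlast_eq : Fin.last (n+1) = (⟨n+1, by omega⟩ : Fin (n+2)) := rfl
  have hinlast : ∑ w, f (w, Sum.inr (Fin.last (n+1)))
      = f (Sum.inl b, Sum.inr (Fin.last (n+1))) + f (Sum.inr ⟨n, hnlt⟩, Sum.inr (Fin.last (n+1))) := by
    apply sum_pair' (fun w => f (w, Sum.inr (Fin.last (n+1)))) (Sum.inl b) (Sum.inr ⟨n, hnlt⟩)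
      (by simp)
    intro w hw1 hw2
    by_contra hne
    obtain ⟨hedge, -⟩ := hfP _ hne
    cases w with
    | inl u =>
      rw [hamIsEdge_lr] at hedge
      exact hw1 (by rw [hedge.1])
    | inr j =>
      rw [hamIsEdge_rr] at hedge
      simp only [Fin.val_last] at hedge
      exact hw2 (by rw [show j = ⟨n, hnlt⟩ from Fin.ext (by simp only [Fin.val_mk]; omega)])
  have houtlast : ∑ w, f (Sum.inr (Fin.last (n+1)), w) = 0 := by
    apply sum_zero'
    intro w
    by_contra hne
    obtain ⟨hedge, -⟩ := hfP _ hne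
    cases w with
    | inl u =>
      rw [hamIsEdge_rl] at hedge
      have := hedge.1
      simp [Fin.ext_iff] at this
    | inr j =>
      rw [hamIsEdge_rr] at hedge
      simp only [Fin.val_last] at hedge
      omega
  have hgenlast : gen (Sum.inr (Fin.last (n+1))) = 0 := by
    apply hgen
    simp only [ne_eq, Sum.inr.injEq]
    simp [Fin.ext_iff]
  have hfb : f (Sum.inl b, Sum.inr (Fin.last (n+1))) = 1 := by
    have hd := hdiv (Sum.inr (Fin.last (n+1)))
    rw [hinlast, houtlast, hgenlast, hloadtot] at hd
    linarith [hf_le (Sum.inl b, Sum.inr (Fin.last (n+1))),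
      hf_le (Sum.inr ⟨n, hnlt⟩, Sum.inr (Fin.last (n+1)))]
  -- θ values at a and b
  have hθa : θ (Sum.inl a) = θ (Sum.inr 0) + 1 := by
    have hne : f (Sum.inr 0, Sum.inl a) ≠ 0 := by rw [hfa.1]; norm_num
    obtain ⟨-, hθe⟩ := hfP _ hne
    simp only at hθe
    rw [hfa.1] at hθe
    linarith
  have h00 : (0 : Fin (n+2)) = (⟨0, by omega⟩ : Fin (n+2)) := by simp [Fin.ext_iff]
  have hθb : θ (Sum.inl b) = θ (Sum.inr 0) + n := by
    have hne : f (Sum.inl b, Sum.inr (Fin.last (n+1))) ≠ 0 := by rw [hfb]; norm_num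
    obtain ⟨-, hθe⟩ := hfP _ hne
    simp only at hθe
    rw [hfb] at hθe
    have hlastθ : θ (Sum.inr (Fin.last (n+1))) = θ (Sum.inr 0) + (n+1) := by
      have := hθaux (n+1) (le_refl _)
      rw [hlast_eq, h00]
      push_cast at this ⊢
      linarith
    linarith
  -- net flow inside G
  set g : Fin n → Fin n → ℝ := fun u v => f (Sum.inl u, Sum.inl v) - f (Sum.inl v, Sum.inl u)
    with hgdef
  have hganti : ∀ u v, g u v = - g v u := by
    intro u v; simp only [hgdef]; ring
  have hgP : ∀ u v, g u v ≠ 0 →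
      G.Adj u v ∧ g u v = θ (Sum.inl v) - θ (Sum.inl u) ∧ g u v ≤ 1 := by
    intro u v hne
    rcases lt_trichotomy u v with hlt | heq | hgt
    · have hzero : f (Sum.inl v, Sum.inl u) = 0 := by
        by_contra hne2
        obtain ⟨hedge, -⟩ := hfP _ hne2
        rw [hamIsEdge_ll] at hedge
        exact absurd hedge.1 (asymm hlt)
      have hguv : g u v = f (Sum.inl u, Sum.inl v) := by
        simp only [hgdef, hzero]; ring
      rw [hguv] at hne ⊢
      obtain ⟨hedge, hθe⟩ := hfP _ hne
      rw [hamIsEdge_ll] at hedge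
      exact ⟨hedge.2, hθe, hf_le _⟩
    · exact absurd (by simp only [hgdef, heq]; ring) hne
    · have hzero : f (Sum.inl u, Sum.inl v) = 0 := by
        by_contra hne2
        obtain ⟨hedge, -⟩ := hfP _ hne2
        rw [hamIsEdge_ll] at hedge
        exact absurd hedge.1 (asymm hgt)
      have hguv : g u v = - f (Sum.inl v, Sum.inl u) := by
        simp only [hgdef, hzero]; ring
      have hne2 : f (Sum.inl v, Sum.inl u) ≠ 0 := by
        intro h
        rw [hguv, h] at hne
        simp at hne
      obtain ⟨hedge, hθe⟩ := hfP _ hne2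
      rw [hamIsEdge_ll] at hedge
      refine ⟨hedge.2.symm, by rw [hguv, hθe]; simp, ?_⟩
      rw [hguv]
      linarith [(abs_le.1 (habs (Sum.inl v, Sum.inl u))).1]
  -- divergence of g inside G
  have hdivG : ∀ v : Fin n, ∑ u, g v u
      = (if v = a then (1:ℝ) else 0) - (if v = b then (1:ℝ) else 0) := by
    intro v
    have hgenv : gen (Sum.inl v) = 0 := hgen _ (by simp)
    have hloadv : load (Sum.inl v) = 0 := hload _ (by simp)
    have hbout : ∑ j : Fin (n+2), f (Sum.inl v, Sum.inr j) = if v = b then (1:ℝ) else 0 := by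
      by_cases hv : v = b
      · rw [if_pos hv, hv]
        rw [sum_single' (fun j => f (Sum.inl b, Sum.inr j)) (Fin.last (n+1)) ?_, hfb]
        intro j hj
        by_contra hne
        obtain ⟨hedge, -⟩ := hfP _ hne
        rw [hamIsEdge_lr] at hedge
        exact hj hedge.2
      · rw [if_neg hv]
        apply sum_zero'
        intro j
        by_contra hne
        obtain ⟨hedge, -⟩ := hfP _ hne
        rw [hamIsEdge_lr] at hedge
        exact hv hedge.1
    have hbin : ∑ j : Fin (n+2), f (Sum.inr j, Sum.inl v) = if v = a then (1:ℝ) else 0 := by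
      by_cases hv : v = a
      · rw [if_pos hv, hv]
        rw [sum_single' (fun j => f (Sum.inr j, Sum.inl a)) 0 ?_, hfa.1]
        intro j hj
        by_contra hne
        obtain ⟨hedge, -⟩ := hfP _ hne
        rw [hamIsEdge_rl] at hedge
        exact hj hedge.1
      · rw [if_neg hv]
        apply sum_zero'
        intro j
        by_contra hne
        obtain ⟨hedge, -⟩ := hfP _ hne
        rw [hamIsEdge_rl] at hedge
        exact hv hedge.2
    have hd := hdiv (Sum.inl v)
    rw [Fintype.sum_sum_type, Fintype.sum_sum_type] at hd
    rw [hbout, hbin, hgenv, hloadv] at hd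
    have : ∑ u, g v u = ∑ u, f (Sum.inl v, Sum.inl u) - ∑ u, f (Sum.inl u, Sum.inl v) := by
      rw [← Finset.sum_sub_distrib]
    rw [this]
    linarith
  -- construct a θ-increasing path following the flow
  have W : ∀ k : ℕ, ∀ v : Fin n,
      (univ.filter (fun u => θ (Sum.inl v) < θ (Sum.inl u))).card ≤ k →
      (v = a ∨ ∃ w, g v w < 0) →
      ∃ p : G.Walk v b, p.IsPath ∧ (∀ x ∈ p.support, θ (Sum.inl v) ≤ θ (Sum.inl x)) ∧
        θ (Sum.inl b) - θ (Sum.inl v) ≤ p.length := by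
    intro k
    induction k with
    | zero =>
      intro v hcard hsrc
      by_cases hvb : v = b
      · subst hvb
        exact ⟨SimpleGraph.Walk.nil, SimpleGraph.Walk.IsPath.nil, by simp, by simp⟩
      · exfalso
        have hex : ∃ u, 0 < g v u := by
          by_contra hno
          push_neg at hno
          have hsum := hdivG v
          rw [if_neg hvb] at hsum
          rcases hsrc with rfl | ⟨w, hw⟩
          · rw [if_pos rfl] at hsum
            have := Finset.sum_nonpos (s := univ) (fun u _ => hno u)
            linarith
          · have hlt := Finset.sum_lt_sum (f := g v) (g := fun _ => (0:ℝ))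
              (fun i _ => hno i) ⟨w, mem_univ w, hw⟩
            rw [Finset.sum_const_zero, hsum] at hlt
            split_ifs at hlt <;> linarith
        obtain ⟨u, hu⟩ := hex
        obtain ⟨hadj, hθe, hle1⟩ := hgP v u (ne_of_gt hu)
        have hmem : u ∈ univ.filter (fun u => θ (Sum.inl v) < θ (Sum.inl u)) :=
          Finset.mem_filter.2 ⟨mem_univ u, by linarith⟩
        have := Finset.card_pos.2 ⟨u, hmem⟩
        omega
    | succ k ih =>
      intro v hcard hsrc
      by_cases hvb : v = b
      · subst hvb
        exact ⟨SimpleGraph.Walk.nil, SimpleGraph.Walk.IsPath.nil, by simp, by simp⟩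
      · have hex : ∃ u, 0 < g v u := by
          by_contra hno
          push_neg at hno
          have hsum := hdivG v
          rw [if_neg hvb] at hsum
          rcases hsrc with rfl | ⟨w, hw⟩
          · rw [if_pos rfl] at hsum
            have := Finset.sum_nonpos (s := univ) (fun u _ => hno u)
            linarith
          · have hlt := Finset.sum_lt_sum (f := g v) (g := fun _ => (0:ℝ))
              (fun i _ => hno i) ⟨w, mem_univ w, hw⟩
            rw [Finset.sum_const_zero, hsum] at hlt
            split_ifs at hlt <;> linarith
        obtain ⟨u, hu⟩ := hex
        obtain ⟨hadj, hθe, hle1⟩ := hgP v u (ne_of_gt hu)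
        have hθlt : θ (Sum.inl v) < θ (Sum.inl u) := by linarith
        have hsub : univ.filter (fun x => θ (Sum.inl u) < θ (Sum.inl x))
            ⊆ univ.filter (fun x => θ (Sum.inl v) < θ (Sum.inl x)) := by
          intro x hx
          rw [Finset.mem_filter] at hx ⊢
          exact ⟨hx.1, lt_trans hθlt hx.2⟩
        have hssub : univ.filter (fun x => θ (Sum.inl u) < θ (Sum.inl x))
            ⊂ univ.filter (fun x => θ (Sum.inl v) < θ (Sum.inl x)) := by
          refine (Finset.ssubset_iff_of_subset hsub).2 ⟨u, ?_, ?_⟩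
          · exact Finset.mem_filter.2 ⟨mem_univ u, hθlt⟩
          · rw [Finset.mem_filter]
            push_neg
            intro _
            exact le_refl _
        have hcard' : (univ.filter (fun x => θ (Sum.inl u) < θ (Sum.inl x))).card ≤ k := by
          have := Finset.card_lt_card hssub
          omega
        obtain ⟨p', hp'path, hp'supp, hp'len⟩ :=
          ih u hcard' (Or.inr ⟨v, by rw [hganti u v]; linarith⟩)
        refine ⟨SimpleGraph.Walk.cons hadj p', ?_, ?_, ?_⟩
        · refine hp'path.cons ?_
          intro hv
          have := hp'supp v hv
          linarith
        · intro x hx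
          rw [SimpleGraph.Walk.support_cons] at hx
          rcases List.mem_cons.1 hx with rfl | hx
          · exact le_refl _
          · have := hp'supp x hx
            linarith
        · rw [SimpleGraph.Walk.length_cons]
          push_cast
          linarith
  -- assemble the Hamiltonian path
  obtain ⟨p, hpath, -, hlen⟩ := W n a
    (le_trans (Finset.card_filter_le _ _) (by simp)) (Or.inl rfl)
  have hlen' : (n : ℝ) - 1 ≤ p.length := by
    rw [hθa, hθb] at hlen
    linarith
  have hlenat : n ≤ p.length + 1 := by
    exact_mod_cast (by push_cast; linarith : (n:ℝ) ≤ (p.length : ℝ) + 1)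
  have hlt : p.length < n := by
    have := hpath.length_lt
    simpa using this
  have hsupplen : p.support.length = n := by
    rw [SimpleGraph.Walk.length_support]
    omega
  refine ⟨p, hpath.isHamiltonian_iff.2 ?_⟩
  intro w
  have hnd := hpath.support_nodup
  have hcard : p.support.toFinset.card = n := by
    rw [List.toFinset_card_of_nodup hnd, hsupplen]
  have huniv : p.support.toFinset = univ := by
    apply Finset.eq_univ_of_card
    rw [hcard, Fintype.card_fin]
  have : w ∈ p.support.toFinset := by
    rw [huniv]; exact mem_univ w
  simpa using this

lemma ham_le_two (hn : 0 < n) : ∀ T ∈ hamAchievable G a b, T ≤ 2 := by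
  rintro T ⟨off, θ, f, gen, load, hoff, h2, h3, h4, hgen0, hload0, hgen, hload, hT⟩
  set S := univ.filter (fun e => hamIsEdge G a b e = true) \ off with hS
  have hfP : ∀ e, f e ≠ 0 → hamIsEdge G a b e = true ∧ f e = θ e.2 - θ e.1 := by
    intro e hfe
    by_cases he : e ∈ S
    · have hedge := (Finset.mem_sdiff.1 he).1
      exact ⟨(Finset.mem_filter.1 hedge).2, (h2 e he).1⟩
    · exact absurd (h3 e he) hfe
  have hf_le : ∀ e, f e ≤ 1 := by
    intro e
    by_cases he : e ∈ S
    · exact (abs_le.1 (h2 e he).2).2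
    · rw [h3 e he]; norm_num
  have hdiv : ∀ z, ∑ w, f (z, w) - ∑ w, f (w, z) = gen z - load z := by
    intro z
    rw [← div_reform f S (fun e he => h3 e he) z]
    exact h4 z
  have h1lt : (1 : ℕ) < n + 2 := by omega
  have hzero_ne_last : (0 : Fin (n+2)) ≠ Fin.last (n+1) := by
    simp [Fin.ext_iff]
  have hload_at0 : load (Sum.inr 0) = 0 := by
    apply hload
    simp [hzero_ne_last]
  have hout0 : ∑ w, f (Sum.inr 0, w)
      = f (Sum.inr 0, Sum.inl a) + f (Sum.inr 0, Sum.inr ⟨1, h1lt⟩) := by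
    apply sum_pair' (fun w => f (Sum.inr 0, w)) (Sum.inl a) (Sum.inr ⟨1, h1lt⟩) (by simp)
    intro w hw1 hw2
    by_contra hne
    obtain ⟨hedge, -⟩ := hfP _ hne
    cases w with
    | inl u =>
      rw [hamIsEdge_rl] at hedge
      exact hw1 (by rw [hedge.2])
    | inr j =>
      rw [hamIsEdge_rr] at hedge
      simp only [Fin.val_zero] at hedge
      exact hw2 (by rw [show j = ⟨1, h1lt⟩ from Fin.ext hedge])
  have hin0 : ∑ w, f (w, Sum.inr 0) = 0 := by
    apply sum_zero'
    intro w
    by_contra hne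
    obtain ⟨hedge, -⟩ := hfP _ hne
    cases w with
    | inl u =>
      rw [hamIsEdge_lr] at hedge
      exact hzero_ne_last hedge.2
    | inr j =>
      rw [hamIsEdge_rr] at hedge
      simp at hedge
  have hd := hdiv (Sum.inr 0)
  rw [hout0, hin0, hload_at0] at hd
  have hgen2 : gen (Sum.inr 0) ≤ 2 := by
    have := hf_le (Sum.inr 0, Sum.inl a)
    have := hf_le (Sum.inr 0, Sum.inr ⟨1, h1lt⟩)
    linarith
  rw [hT, sum_single' gen (Sum.inr 0) hgen]
  exact hgen2
def hamAct {n : ℕ} (G : SimpleGraph (Fin n)) [DecidableRel G.Adj] (a b : Fin n)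
    (idx : Fin n → ℕ) : HamNode n × HamNode n → Bool
  | (Sum.inl u, Sum.inl v) =>
      decide (u < v ∧ G.Adj u v ∧ (idx v = idx u + 1 ∨ idx u = idx v + 1))
  | e => hamIsEdge G a b e

variable {idx : Fin n → ℕ}

lemma hamAct_ll {u v : Fin n} :
    hamAct G a b idx (Sum.inl u, Sum.inl v) = true ↔
      u < v ∧ G.Adj u v ∧ (idx v = idx u + 1 ∨ idx u = idx v + 1) := by
  simp [hamAct]

lemma hamAct_rl {i : Fin (n+2)} {j : Fin n} :
    hamAct G a b idx (Sum.inr i, Sum.inl j) = true ↔ i = 0 ∧ j = a := by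
  simp [hamAct, hamIsEdge]

lemma hamAct_lr {i : Fin n} {j : Fin (n+2)} :
    hamAct G a b idx (Sum.inl i, Sum.inr j) = true ↔ i = b ∧ j = Fin.last (n + 1) := by
  simp [hamAct, hamIsEdge]

lemma hamAct_rr {i j : Fin (n+2)} :
    hamAct G a b idx (Sum.inr i, Sum.inr j) = true ↔ (j : ℕ) = (i : ℕ) + 1 := by
  simp [hamAct, hamIsEdge]

lemma hamAct_imp (e : HamNode n × HamNode n) (h : hamAct G a b idx e = true) :
    hamIsEdge G a b e = true := by
  obtain ⟨x, y⟩ := e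
  cases x <;> cases y
  · rw [hamAct_ll] at h
    rw [hamIsEdge_ll]
    exact ⟨h.1, h.2.1⟩
  · exact h
  · exact h
  · exact h
lemma ham_mem (hn : 0 < n) (idx : Fin n → ℕ) (s : ℕ → Fin n)
    (hsi : ∀ v, s (idx v) = v)
    (his : ∀ k, k < n → idx (s k) = k)
    (hlt : ∀ v, idx v < n)
    (hia : idx a = 0) (hib : idx b + 1 = n)
    (hadj : ∀ k, k + 1 < n → G.Adj (s k) (s (k+1))) :
    (2:ℝ) ∈ hamAchievable G a b := by
  classical
  have hinj : ∀ u v : Fin n, idx u = idx v → u = v := by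
    intro u v h
    rw [← hsi u, ← hsi v, h]
  set θ : HamNode n → ℝ := Sum.elim (fun v => (idx v : ℝ) + 1) (fun i => (i : ℝ)) with hθ
  set f : HamNode n × HamNode n → ℝ :=
    fun e => if hamAct G a b idx e = true then θ e.2 - θ e.1 else 0 with hf
  have hkept : univ.filter (fun e => hamIsEdge G a b e = true) \
      univ.filter (fun e => hamIsEdge G a b e = true ∧ hamAct G a b idx e = false)
      = univ.filter (fun e => hamAct G a b idx e = true) := by
    ext e
    simp only [Finset.mem_sdiff, Finset.mem_filter, mem_univ, true_and, not_and,
      Bool.not_eq_false]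
    constructor
    · rintro ⟨h1, h2⟩
      exact h2 h1
    · intro h
      exact ⟨hamAct_imp G a b e h, fun _ => h⟩
  refine ⟨univ.filter (fun e => hamIsEdge G a b e = true ∧ hamAct G a b idx e = false),
    θ, f, (fun z => if z = Sum.inr 0 then 2 else 0),
    (fun z => if z = Sum.inr (Fin.last (n+1)) then 2 else 0), ?_, ?_, ?_, ?_, ?_, ?_, ?_, ?_, ?_⟩
  · intro e he
    rw [Finset.mem_filter] at he ⊢
    exact ⟨he.1, he.2.1⟩
  · rw [hkept]
    intro e he
    rw [Finset.mem_filter] at he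
    obtain ⟨-, hact⟩ := he
    have hfe : f e = θ e.2 - θ e.1 := by simp only [hf]; rw [if_pos hact]
    refine ⟨hfe, ?_⟩
    rw [hfe]
    obtain ⟨x, y⟩ := e
    cases x with
    | inl u =>
      cases y with
      | inl v =>
        rw [hamAct_ll] at hact
        obtain ⟨-, -, hc⟩ := hact
        simp only [hθ, Sum.elim_inl]
        rcases hc with h | h
        · have hv : (idx v : ℝ) = idx u + 1 := by exact_mod_cast congrArg Nat.cast h
          rw [hv]
          rw [show ((idx u:ℝ) + 1 + 1) - ((idx u:ℝ) + 1) = 1 by ring]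
          norm_num
        · have hv : (idx u : ℝ) = idx v + 1 := by exact_mod_cast congrArg Nat.cast h
          rw [hv]
          rw [show ((idx v:ℝ) + 1) - ((idx v:ℝ) + 1 + 1) = -1 by ring]
          norm_num
      | inr j =>
        rw [hamAct_lr] at hact
        obtain ⟨h1, rfl⟩ := hact
        rw [h1]
        simp only [hθ, Sum.elim_inl, Sum.elim_inr, Fin.val_last]
        have hv : (idx b : ℝ) + 1 = n := by exact_mod_cast hib
        push_cast
        rw [show ((n:ℝ) + 1) - ((idx b:ℝ) + 1) = 1 by rw [← hv]; ring]
        norm_num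
    | inr i =>
      cases y with
      | inl u =>
        rw [hamAct_rl] at hact
        obtain ⟨rfl, h1⟩ := hact
        rw [h1]
        simp only [hθ, Sum.elim_inl, Sum.elim_inr, Fin.val_zero, hia]
        norm_num
      | inr j =>
        rw [hamAct_rr] at hact
        simp only [hθ, Sum.elim_inr]
        have hv : (j : ℝ) = i + 1 := by exact_mod_cast hact
        rw [hv]
        rw [show ((i:ℝ) + 1) - (i:ℝ) = 1 by ring]
        norm_num
  · rw [hkept]
    intro e he
    rw [Finset.mem_filter] at he
    simp only [mem_univ, true_and] at he
    simp only [hf]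
    rw [if_neg he]
  · rw [hkept]
    intro z
    rw [div_reform f (univ.filter (fun e => hamAct G a b idx e = true)) ?zero z]
    case zero =>
      intro e he
      rw [Finset.mem_filter] at he
      simp only [mem_univ, true_and] at he
      simp only [hf]
      rw [if_neg he]
    have hfz : ∀ e, ¬ hamAct G a b idx e = true → f e = 0 := by
      intro e h
      simp only [hf]
      rw [if_neg h]
    have hfval : ∀ e, hamAct G a b idx e = true → f e = θ e.2 - θ e.1 := by
      intro e h
      simp only [hf]
      rw [if_pos h]
    have hbcast : (idx b : ℝ) + 1 = n := by exact_mod_cast hib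
    have hval_conn_a : f (Sum.inr 0, Sum.inl a) = 1 := by
      rw [hfval _ ((hamAct_rl G a b).2 ⟨rfl, rfl⟩)]
      simp [hθ, hia]
    have hval_conn_b : f (Sum.inl b, Sum.inr (Fin.last (n+1))) = 1 := by
      rw [hfval _ ((hamAct_lr G a b).2 ⟨rfl, rfl⟩)]
      simp only [hθ, Sum.elim_inl, Sum.elim_inr, Fin.val_last]
      push_cast
      linarith
    have hval_aux : ∀ i j : Fin (n+2), (j:ℕ) = (i:ℕ)+1 → f (Sum.inr i, Sum.inr j) = 1 := by
      intro i j hij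
      rw [hfval _ ((hamAct_rr G a b).2 hij)]
      simp only [hθ, Sum.elim_inr]
      have : (j : ℝ) = i + 1 := by exact_mod_cast hij
      rw [this]; ring
    -- pointwise description of the net flow inside G
    have hpoint : ∀ v u : Fin n, f (Sum.inl v, Sum.inl u) - f (Sum.inl u, Sum.inl v)
        = (if idx v + 1 < n ∧ u = s (idx v + 1) then (1:ℝ) else 0)
          - (if 0 < idx v ∧ u = s (idx v - 1) then (1:ℝ) else 0) := by
      intro v u
      by_cases hc1 : idx u = idx v + 1
      · have hlt1 : idx v + 1 < n := hc1 ▸ hlt u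
        have hu : u = s (idx v + 1) := by rw [← hc1, hsi]
        rw [if_pos ⟨hlt1, hu⟩, if_neg ?neg]
        case neg =>
          rintro ⟨hpos, hu2⟩
          have h5 := his (idx v - 1) (by omega)
          rw [← hu2] at h5
          omega
        have hadjvu : G.Adj v u := by
          have h6 := hadj (idx v) hlt1
          rw [hsi v] at h6
          rw [hu]
          exact h6
        have huv : u ≠ v := fun h => by rw [h] at hc1; omega
        have hcast : (idx u : ℝ) = idx v + 1 := by exact_mod_cast hc1
        rcases lt_or_gt_of_ne huv with hlt2 | hlt2
        · have hz1 : f (Sum.inl v, Sum.inl u) = 0 := by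
            apply hfz
            intro hact
            rw [hamAct_ll] at hact
            exact absurd hact.1 (asymm hlt2)
          have hv1 : f (Sum.inl u, Sum.inl v) = θ (Sum.inl v) - θ (Sum.inl u) :=
            hfval _ ((hamAct_ll G a b).2 ⟨hlt2, hadjvu.symm, Or.inr hc1⟩)
          rw [hz1, hv1]
          simp only [hθ, Sum.elim_inl]
          rw [hcast]; ring
        · have hz1 : f (Sum.inl u, Sum.inl v) = 0 := by
            apply hfz
            intro hact
            rw [hamAct_ll] at hact
            exact absurd hact.1 (asymm hlt2)
          have hv1 : f (Sum.inl v, Sum.inl u) = θ (Sum.inl u) - θ (Sum.inl v) :=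
            hfval _ ((hamAct_ll G a b).2 ⟨hlt2, hadjvu, Or.inl hc1⟩)
          rw [hz1, hv1]
          simp only [hθ, Sum.elim_inl]
          rw [hcast]; ring
      · by_cases hc2 : idx v = idx u + 1
        · have hlt1 : idx u + 1 < n := hc2 ▸ hlt v
          have hu : u = s (idx v - 1) := by rw [hc2]; simp [hsi]
          rw [if_neg ?neg2, if_pos ⟨by omega, hu⟩]
          case neg2 =>
            rintro ⟨hpos, hu2⟩
            have h5 := his (idx v + 1) hpos
            rw [← hu2] at h5
            omega
          have hadjvu : G.Adj u v := by
            have h6 := hadj (idx u) hlt1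
            rw [hsi u, ← hc2, hsi v] at h6
            exact h6
          have huv : u ≠ v := fun h => by rw [h] at hc2; omega
          have hcast : (idx v : ℝ) = idx u + 1 := by exact_mod_cast hc2
          rcases lt_or_gt_of_ne huv with hlt2 | hlt2
          · have hz1 : f (Sum.inl v, Sum.inl u) = 0 := by
              apply hfz
              intro hact
              rw [hamAct_ll] at hact
              exact absurd hact.1 (asymm hlt2)
            have hv1 : f (Sum.inl u, Sum.inl v) = θ (Sum.inl v) - θ (Sum.inl u) :=
              hfval _ ((hamAct_ll G a b).2 ⟨hlt2, hadjvu, Or.inl hc2⟩)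
            rw [hz1, hv1]
            simp only [hθ, Sum.elim_inl]
            rw [hcast]; ring
          · have hz1 : f (Sum.inl u, Sum.inl v) = 0 := by
              apply hfz
              intro hact
              rw [hamAct_ll] at hact
              exact absurd hact.1 (asymm hlt2)
            have hv1 : f (Sum.inl v, Sum.inl u) = θ (Sum.inl u) - θ (Sum.inl v) :=
              hfval _ ((hamAct_ll G a b).2 ⟨hlt2, hadjvu.symm, Or.inr hc2⟩)
            rw [hz1, hv1]
            simp only [hθ, Sum.elim_inl]
            rw [hcast]; ring
        · rw [if_neg ?neg3, if_neg ?neg4]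
          case neg3 =>
            rintro ⟨hpos, hu2⟩
            have h5 := his (idx v + 1) (by omega)
            rw [← hu2] at h5
            omega
          case neg4 =>
            rintro ⟨hpos, hu2⟩
            have h6 := hlt v
            have h5 := his (idx v - 1) (by omega)
            rw [← hu2] at h5
            omega
          have hz1 : f (Sum.inl v, Sum.inl u) = 0 := by
            apply hfz
            intro hact
            rw [hamAct_ll] at hact
            rcases hact.2.2 with h | h <;> omega
          have hz2 : f (Sum.inl u, Sum.inl v) = 0 := by
            apply hfz
            intro hact
            rw [hamAct_ll] at hact
            rcases hact.2.2 with h | h <;> omega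
          rw [hz1, hz2]
    dsimp only
    cases z with
    | inl v =>
      rw [if_neg (by simp), if_neg (by simp), Fintype.sum_sum_type, Fintype.sum_sum_type]
      have hbout : ∑ j : Fin (n+2), f (Sum.inl v, Sum.inr j) = if v = b then (1:ℝ) else 0 := by
        by_cases hv : v = b
        · rw [if_pos hv, hv,
            sum_single' (fun j => f (Sum.inl b, Sum.inr j)) (Fin.last (n+1)) ?_]
          · exact hval_conn_b
          · intro j hj
            apply hfz
            intro hact
            rw [hamAct_lr] at hact
            exact hj hact.2
        · rw [if_neg hv]
          apply sum_zero'
          intro j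
          apply hfz
          intro hact
          rw [hamAct_lr] at hact
          exact hv hact.1
      have hbin : ∑ j : Fin (n+2), f (Sum.inr j, Sum.inl v) = if v = a then (1:ℝ) else 0 := by
        by_cases hv : v = a
        · rw [if_pos hv, hv,
            sum_single' (fun j => f (Sum.inr j, Sum.inl a)) 0 ?_]
          · exact hval_conn_a
          · intro j hj
            apply hfz
            intro hact
            rw [hamAct_rl] at hact
            exact hj hact.1
        · rw [if_neg hv]
          apply sum_zero'
          intro j
          apply hfz
          intro hact
          rw [hamAct_rl] at hact
          exact hv hact.2
      have hcore : ∑ u, f (Sum.inl v, Sum.inl u) - ∑ u, f (Sum.inl u, Sum.inl v)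
          = (if idx v + 1 < n then (1:ℝ) else 0) - (if 0 < idx v then (1:ℝ) else 0) := by
        rw [← Finset.sum_sub_distrib,
          Finset.sum_congr rfl (fun u _ => hpoint v u), Finset.sum_sub_distrib]
        congr 1
        · by_cases h : idx v + 1 < n
          · rw [if_pos h, sum_single' _ (s (idx v + 1)) ?_]
            · rw [if_pos ⟨h, rfl⟩]
            · intro y hy
              rw [if_neg]
              rintro ⟨-, h2⟩
              exact hy h2
          · rw [if_neg h]
            apply sum_zero'
            intro y
            rw [if_neg]
            rintro ⟨h1, -⟩
            exact h h1
        · by_cases h : 0 < idx v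
          · rw [if_pos h, sum_single' _ (s (idx v - 1)) ?_]
            · rw [if_pos ⟨h, rfl⟩]
            · intro y hy
              rw [if_neg]
              rintro ⟨-, h2⟩
              exact hy h2
          · rw [if_neg h]
            apply sum_zero'
            intro y
            rw [if_neg]
            rintro ⟨h1, -⟩
            exact h h1
      have hvbiff : idx v + 1 < n ↔ v ≠ b := by
        constructor
        · intro h hvb
          rw [hvb] at h
          omega
        · intro h
          have h1 := hlt v
          rcases Nat.lt_or_ge (idx v + 1) n with h2 | h2
          · exact h2
          · exfalso
            exact h (hinj v b (by omega))
      have hvaiff : 0 < idx v ↔ v ≠ a := by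
        constructor
        · intro h hva
          rw [hva, hia] at h
          omega
        · intro h
          rcases Nat.eq_zero_or_pos (idx v) with h2 | h2
          · exact absurd (hinj v a (by omega)) h
          · exact h2
      have hb' : (if idx v + 1 < n then (1:ℝ) else 0) = (if v = b then 0 else 1) := by
        by_cases h : v = b
        · rw [if_pos h, if_neg (fun hc => (hvbiff.1 hc) h)]
        · rw [if_pos (hvbiff.2 h), if_neg h]
      have ha' : (if 0 < idx v then (1:ℝ) else 0) = (if v = a then 0 else 1) := by
        by_cases h : v = a
        · rw [if_pos h, if_neg (fun hc => (hvaiff.1 hc) h)]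
        · rw [if_pos (hvaiff.2 h), if_neg h]
      rw [hb', ha'] at hcore
      rw [hbout, hbin]
      by_cases h1 : v = a <;> by_cases h2 : v = b
      · rw [if_pos h2, if_pos h1] at hcore ⊢
        linarith
      · rw [if_neg h2, if_pos h1] at hcore ⊢
        linarith
      · rw [if_pos h2, if_neg h1] at hcore ⊢
        linarith
      · rw [if_neg h2, if_neg h1] at hcore ⊢
        linarith
    | inr i =>
      have hisum1 : ∑ u : Fin n, f (Sum.inr i, Sum.inl u) = if i = 0 then (1:ℝ) else 0 := by
        by_cases hi : i = 0
        · rw [if_pos hi, hi, sum_single' (fun u => f (Sum.inr 0, Sum.inl u)) a ?_]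
          · exact hval_conn_a
          · intro u hu
            apply hfz
            intro hact
            rw [hamAct_rl] at hact
            exact hu hact.2
        · rw [if_neg hi]
          apply sum_zero'
          intro u
          apply hfz
          intro hact
          rw [hamAct_rl] at hact
          exact hi hact.1
      have hisum2 : ∑ j : Fin (n+2), f (Sum.inr i, Sum.inr j)
          = if (i:ℕ) < n+1 then (1:ℝ) else 0 := by
        by_cases hi : (i:ℕ) < n+1
        · rw [if_pos hi,
            sum_single' (fun j => f (Sum.inr i, Sum.inr j)) ⟨(i:ℕ)+1, by omega⟩ ?_]
          · exact hval_aux i ⟨(i:ℕ)+1, by omega⟩ rfl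
          · intro j hj
            apply hfz
            intro hact
            rw [hamAct_rr] at hact
            exact hj (Fin.ext (by rw [Fin.val_mk]; exact hact))
        · rw [if_neg hi]
          apply sum_zero'
          intro j
          apply hfz
          intro hact
          rw [hamAct_rr] at hact
          have := j.isLt
          omega
      have hisum3 : ∑ u : Fin n, f (Sum.inl u, Sum.inr i)
          = if i = Fin.last (n+1) then (1:ℝ) else 0 := by
        by_cases hi : i = Fin.last (n+1)
        · rw [if_pos hi, hi, sum_single' (fun u => f (Sum.inl u, Sum.inr (Fin.last (n+1)))) b ?_]
          · exact hval_conn_b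
          · intro u hu
            apply hfz
            intro hact
            rw [hamAct_lr] at hact
            exact hu hact.1
        · rw [if_neg hi]
          apply sum_zero'
          intro u
          apply hfz
          intro hact
          rw [hamAct_lr] at hact
          exact hi hact.2
      have hisum4 : ∑ j : Fin (n+2), f (Sum.inr j, Sum.inr i)
          = if 0 < (i:ℕ) then (1:ℝ) else 0 := by
        by_cases hi : 0 < (i:ℕ)
        · rw [if_pos hi]
          refine (sum_single' (fun j => f (Sum.inr j, Sum.inr i)) ⟨(i:ℕ)-1, by omega⟩ ?_).trans ?_
          · intro j hj
            apply hfz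
            intro hact
            rw [hamAct_rr] at hact
            exact hj (Fin.ext (show (j:ℕ) = (i:ℕ) - 1 by omega))
          · exact hval_aux ⟨(i:ℕ)-1, by omega⟩ i (show (i:ℕ) = (i:ℕ) - 1 + 1 by omega)
        · rw [if_neg hi]
          apply sum_zero'
          intro j
          apply hfz
          intro hact
          rw [hamAct_rr] at hact
          omega
      rw [Fintype.sum_sum_type, Fintype.sum_sum_type, hisum1, hisum2, hisum3, hisum4]
      have hc1 : (i = 0) ↔ ((i:ℕ) = 0) := by
        rw [Fin.ext_iff]
        simp
      have hc2 : (i = Fin.last (n+1)) ↔ ((i:ℕ) = n+1) := by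
        rw [Fin.ext_iff]
        simp
      have hc3 : (Sum.inr i = (Sum.inr 0 : HamNode n)) ↔ ((i:ℕ) = 0) := by
        rw [Sum.inr.injEq]
        exact hc1
      have hc4 : (Sum.inr i = (Sum.inr (Fin.last (n+1)) : HamNode n)) ↔ ((i:ℕ) = n+1) := by
        rw [Sum.inr.injEq]
        exact hc2
      simp only [hc1, hc2, hc3, hc4]
      have := i.isLt
      split_ifs
      all_goals try norm_num
      all_goals omega
  · intro z
    dsimp only
    split <;> norm_num
  · intro z
    dsimp only
    split <;> norm_num
  · intro z hz
    exact if_neg hz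
  · intro z hz
    exact if_neg hz
  · rw [sum_single' _ (Sum.inr 0) (fun y hy => if_neg hy)]
    simp
/-- Theorem 2 (reduction): the maximum switching flow of the Hamiltonian-path
reduction network equals `2` if and only if `G` has a Hamiltonian path from `a` to `b`. -/
theorem msf_eq_two_iff_hamiltonian_path {n : ℕ} (G : SimpleGraph (Fin n))
    [DecidableRel G.Adj] (a b : Fin n) :
    IsGreatest (hamAchievable G a b) 2 ↔
      ∃ p : G.Walk a b, p.IsHamiltonian := by
  rcases Nat.eq_zero_or_pos n with h0 | hn
  · subst h0
    exact a.elim0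
  constructor
  · rintro ⟨hmem, -⟩
    obtain ⟨off, θ, f, gen, load, hoff, h2, h3, h4, hgen0, hload0, hgen, hload, hT⟩ := hmem
    exact ham_path_of_mem G a b hn off θ f gen load h2 h3 h4 hload0 hgen hload hT
  · rintro ⟨p, hp⟩
    constructor
    · -- achievability from the Hamiltonian path
      have hlen : p.support.length = n := by
        rw [SimpleGraph.Walk.length_support, hp.length_eq, Fintype.card_fin]
        omega
      have hnd : p.support.Nodup := hp.isPath.support_nodup
      have hmeml : ∀ v : Fin n, v ∈ p.support := fun v => hp.mem_support v
      have hlt : ∀ v : Fin n, p.support.idxOf v < n := by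
        intro v
        have h := List.idxOf_lt_length_iff.2 (hmeml v)
        omega
      have hsi : ∀ v : Fin n, p.support.getD (p.support.idxOf v) a = v := by
        intro v
        have h1 : p.support.idxOf v < p.support.length := List.idxOf_lt_length_iff.2 (hmeml v)
        rw [List.getD_eq_getElem _ _ h1]
        simpa using List.idxOf_get h1
      have his : ∀ k, k < n → p.support.idxOf (p.support.getD k a) = k := by
        intro k hk
        have hk' : k < p.support.length := by omega
        rw [List.getD_eq_getElem _ _ hk']
        exact List.Nodup.idxOf_getElem hnd k hk'
      have hia : p.support.idxOf a = 0 := by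
        have hcons : p.support = a :: p.support.tail := p.support_eq_cons
        rw [hcons, List.idxOf_cons_self]
      have hib : p.support.idxOf b + 1 = n := by
        have h2 := p.getLast_support
        rw [List.getLast_eq_getElem] at h2
        have h4 := List.Nodup.idxOf_getElem hnd (p.support.length - 1) (by omega)
        rw [h2] at h4
        omega
      have hadjs : ∀ k, k + 1 < n →
          G.Adj (p.support.getD k a) (p.support.getD (k+1) a) := by
        intro k hk
        have hchain := p.isChain_adj_support
        rw [List.isChain_iff_getElem] at hchain
        have h1 : k < p.support.length - 1 := by omega
        have h2 := hchain k (by omega)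
        have hk1 : k < p.support.length := by omega
        have hk2 : k + 1 < p.support.length := by omega
        rw [List.getD_eq_getElem _ _ hk1, List.getD_eq_getElem _ _ hk2]
        simpa using h2
      exact ham_mem G a b hn (fun v => p.support.idxOf v) (fun k => p.support.getD k a)
        hsi his hlt hia hib hadjs
    · intro T hT
      exact ham_le_two G a b hn T hT
end

section
/- In an LDC network whose underlying graph is a tree (no cycles), for any flow assignment f satisfying the capacity constraints |f(e)| ≤ c(e) and Kirchhoff's conservation law with generations and loads, there exists an assignment of phase angles θ such that f also satisfies the LDC power law f(a,b) = s(a,b)·(θ(b) − θ(a)) on every edge. Consequently, the maximum LDC power flow of a tree network equals its ordinary maximum flow. -/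
open Finset

namespace TreeLDCAux

variable {V : Type} [DecidableEq V] {G : SimpleGraph V}

def wt (g : V → V → ℝ) : {u v : V} → G.Walk u v → ℝ
  | _, _, .nil => 0
  | u, _, .cons (v := w) _ p => g u w + wt g p

lemma wt_nil (g : V → V → ℝ) {u : V} : wt g (SimpleGraph.Walk.nil : G.Walk u u) = 0 := rfl

lemma wt_cons (g : V → V → ℝ) {u v w : V} (h : G.Adj u v) (p : G.Walk v w) :
    wt g (.cons h p) = g u v + wt g p := rfl

lemma wt_append (g : V → V → ℝ) {u v w : V} (p : G.Walk u v) (q : G.Walk v w) :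
    wt g (p.append q) = wt g p + wt g q := by
  induction p with
  | nil => simp [wt]
  | cons h p ih => simp only [SimpleGraph.Walk.cons_append, wt_cons, ih]; ring

lemma exists_theta (hT : G.IsTree) (g : V → V → ℝ)
    (gsym : ∀ u v, G.Adj u v → g v u = -g u v) :
    ∃ θ : V → ℝ, ∀ u v, G.Adj u v → θ v - θ u = g u v := by
  obtain ⟨r⟩ := hT.isConnected.nonempty
  have huniq := hT.existsUnique_path
  let P : ∀ v : V, G.Walk r v := fun v => ((hT.isConnected.preconnected r v).some).toPath
  have hP : ∀ v, (P v).IsPath := fun v => ((hT.isConnected.preconnected r v).some).toPath.2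
  refine ⟨fun v => wt g (P v), ?_⟩
  have hwt : ∀ (v : V) (p : G.Walk r v), p.IsPath → wt g p = wt g (P v) := by
    intro v p hp
    obtain ⟨q, _, hu⟩ := huniq r v
    rw [hu p hp, hu _ (hP v)]
  intro u v h
  by_cases hv : v ∈ (P u).support
  · -- drop the tail of P u after v; it is the unique path from v to u, i.e. the edge vu
    have hsplit := SimpleGraph.Walk.take_spec (P u) hv
    have ht : ((P u).takeUntil v hv).IsPath := (hP u).takeUntil hv
    have hd : ((P u).dropUntil v hv).IsPath := (hP u).dropUntil hv
    have hsingle : (SimpleGraph.Walk.cons h.symm .nil : G.Walk v u).IsPath := by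
      apply SimpleGraph.Walk.IsPath.mk'
      simp [h.ne.symm]
    obtain ⟨q, _, huq⟩ := huniq v u
    have heq : (P u).dropUntil v hv = SimpleGraph.Walk.cons h.symm .nil :=
      (huq _ hd).trans (huq _ hsingle).symm
    have h1 : wt g (P u) = wt g (P v) + g v u := by
      conv_lhs => rw [← hsplit]
      rw [wt_append, heq, wt_cons, wt_nil, hwt v _ ht]
      ring
    rw [gsym u v h] at h1
    linarith
  · -- extend P u by the edge uv to get the path to v
    have hp' : ((P u).concat h).IsPath := by
      apply SimpleGraph.Walk.IsPath.mk'
      rw [SimpleGraph.Walk.support_concat]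
      simpa using List.Nodup.concat hv (hP u).support_nodup
    have h1 : wt g ((P u).concat h) = wt g (P v) := hwt v _ hp'
    rw [SimpleGraph.Walk.concat_eq_append, wt_append, wt_cons, wt_nil] at h1
    linarith

end TreeLDCAux

/-- Lemma 4: in an LDC network whose underlying graph is a tree, (1) any
capacity-feasible conservative flow can be equipped with phase angles satisfying the
LDC power law, and (2) consequently the maximum LDC power flow of the network equals
its ordinary maximum flow.  Flows are modelled as antisymmetric functions
`f : V → V → ℝ` vanishing on non-edges. -/
theorem tree_ldc_equals_maxflow {V : Type} [Fintype V] [DecidableEq V]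
    (G : SimpleGraph V) (hT : G.IsTree)
    (sus cap : V → V → ℝ)
    (hsus : ∀ u v, G.Adj u v → 0 < sus u v) (hsussym : ∀ u v, sus u v = sus v u)
    (hcap : ∀ u v, G.Adj u v → 0 < cap u v) (hcapsym : ∀ u v, cap u v = cap v u)
    (Gen Load : Set V) :
    (∀ (f : V → V → ℝ) (gen load : V → ℝ),
        (∀ u v, f u v = -f v u) →
        (∀ u v, ¬G.Adj u v → f u v = 0) →
        (∀ u v, G.Adj u v → |f u v| ≤ cap u v) →
        (∀ u, (∑ v : V, f u v) = gen u - load u) →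
        ∃ θ : V → ℝ, ∀ u v, G.Adj u v → f u v = sus u v * (θ v - θ u)) ∧
    sSup {T : ℝ | ∃ (θ : V → ℝ) (f : V → V → ℝ) (gen load : V → ℝ),
        (∀ u v, f u v = -f v u) ∧
        (∀ u v, ¬G.Adj u v → f u v = 0) ∧
        (∀ u v, G.Adj u v → f u v = sus u v * (θ v - θ u)) ∧
        (∀ u v, G.Adj u v → |f u v| ≤ cap u v) ∧
        (∀ u, (∑ v : V, f u v) = gen u - load u) ∧
        (∀ u, 0 ≤ gen u) ∧ (∀ u, 0 ≤ load u) ∧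
        (∀ u, u ∉ Gen → gen u = 0) ∧ (∀ u, u ∉ Load → load u = 0) ∧
        T = ∑ u : V, gen u} =
      sSup {T : ℝ | ∃ (f : V → V → ℝ) (gen load : V → ℝ),
        (∀ u v, f u v = -f v u) ∧
        (∀ u v, ¬G.Adj u v → f u v = 0) ∧
        (∀ u v, G.Adj u v → |f u v| ≤ cap u v) ∧
        (∀ u, (∑ v : V, f u v) = gen u - load u) ∧
        (∀ u, 0 ≤ gen u) ∧ (∀ u, 0 ≤ load u) ∧
        (∀ u, u ∉ Gen → gen u = 0) ∧ (∀ u, u ∉ Load → load u = 0) ∧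
        T = ∑ u : V, gen u} := by
  have part1 : ∀ (f : V → V → ℝ) (gen load : V → ℝ),
      (∀ u v, f u v = -f v u) →
      (∀ u v, ¬G.Adj u v → f u v = 0) →
      (∀ u v, G.Adj u v → |f u v| ≤ cap u v) →
      (∀ u, (∑ v : V, f u v) = gen u - load u) →
      ∃ θ : V → ℝ, ∀ u v, G.Adj u v → f u v = sus u v * (θ v - θ u) := by
    intro f gen load hasym hvan _ _
    obtain ⟨θ, hθ⟩ := TreeLDCAux.exists_theta hT (fun u v => f u v / sus u v)
      (by
        intro u v h
        show f v u / sus v u = -(f u v / sus u v)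
        rw [hasym v u, hsussym v u]
        ring)
    refine ⟨θ, fun u v h => ?_⟩
    have hs := (hsus u v h).ne'
    rw [hθ u v h]
    field_simp
  refine ⟨part1, ?_⟩
  congr 1
  ext T
  constructor
  · rintro ⟨θ, f, gen, load, h1, h2, _, h4, h5, h6, h7, h8, h9, h10⟩
    exact ⟨f, gen, load, h1, h2, h4, h5, h6, h7, h8, h9, h10⟩
  · rintro ⟨f, gen, load, h1, h2, h4, h5, h6, h7, h8, h9, h10⟩
    obtain ⟨θ, hθ⟩ := part1 f gen load h1 h2 h4 h5
    exact ⟨θ, f, gen, load, h1, h2, hθ, h4, h5, h6, h7, h8, h9, h10⟩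
end

section
/- Consider a triangle with nodes {t, l, c} and edges t–c, c–l, t–l, and a triangle with nodes {v, e, c} with edges e–v (susceptance s_ev), e–c and v–c (susceptance 1), all edges in the first triangle of susceptance 1, sharing node c, in any LDC feasible solution. Then the flow on t–l satisfies f(t,l) = 2·f(t,c) + 2·f(e,c) − f(e,v)/s_ev, provided the only other edges at c are t–c, v–c, e–c, c–l, and c has zero generation and load. -/
/-- Equation (2) of Lemma 2: for the two triangles `{t,l,c}` (susceptance 1) and
`{v,e,c}` (edge `e–v` with susceptance `s_ev > 0`, edges `e–c`, `v–c` susceptance 1)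
sharing node `c`, with all flows given by the LDC power law and Kirchhoff's
conservation law at `c` (which has no generation or load and no other incident edges),
the flow on `t–l` satisfies `f(t,l) = 2·f(t,c) + 2·f(e,c) − f(e,v)/s_ev`. -/
theorem gfcn_flow_equation (sev θt θl θc θv θe ftl ftc fcl fev fec fvc : ℝ)
    (hsev : 0 < sev)
    (htl : ftl = θl - θt) (htc : ftc = θc - θt) (hcl : fcl = θl - θc)
    (hev : fev = sev * (θv - θe)) (hec : fec = θc - θe) (hvc : fvc = θc - θv)
    (hKc : ftc + fvc + fec = fcl) :
    ftl = 2 * ftc + 2 * fec - fev / sev := by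
  have h : fev / sev = θv - θe := by field_simp [hev]; exact hev
  subst htl htc hcl hec hvc
  linarith
end

section
/- In the generator FACTS choice network GFCN(x,v) (as defined, with v acting as load), every solution achieving the maximum total generation 6.1x has load at v equal to either 0 or x, and both values are attained by some optimal solution. -/
set_option maxHeartbeats 1000000 in
/-- In `GFCN(x,v)` (with `v` acting as load), the set of values of the load served at
`v` over the optimal solutions — those achieving the maximum total generation `6.1x` —
is exactly `{0, x}`. -/
theorem gfcn_optimal_load_values (x : ℝ) (hx : 0 < x) :
    {Lv : ℝ |
      ∃ (s θg θe θt θv θc θl fgv fev fec fvc ftc ftl fcl Gg Ge Gt Ll : ℝ),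
        0.4 ≤ s ∧ s ≤ 1.6 ∧
        fgv = θv - θg ∧ |fgv| ≤ x ∧
        fev = s * (θv - θe) ∧ |fev| ≤ 0.4 * x ∧
        fec = θc - θe ∧ |fec| ≤ 0.65 * x ∧
        fvc = θc - θv ∧ |fvc| ≤ 0.9 * x ∧
        ftc = θc - θt ∧ |ftc| ≤ x ∧
        ftl = θl - θt ∧ |ftl| ≤ 3.55 * x ∧
        fcl = θl - θc ∧ |fcl| ≤ 2.55 * x ∧
        0 ≤ Gg ∧ 0 ≤ Ge ∧ 0 ≤ Gt ∧ 0 ≤ Lv ∧ 0 ≤ Ll ∧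
        fgv = Gg ∧
        fev + fec = Ge ∧
        ftc + ftl = Gt ∧
        fvc - fgv - fev = 0 - Lv ∧
        fcl - fec - fvc - ftc = 0 ∧
        -ftl - fcl = 0 - Ll ∧
        Gg + Ge + Gt = 6.1 * x} = {0, x} := by
  ext Lv
  simp only [Set.mem_setOf_eq, Set.mem_insert_iff, Set.mem_singleton_iff]
  constructor
  · rintro ⟨s, θg, θe, θt, θv, θc, θl, fgv, fev, fec, fvc, ftc, ftl, fcl, Gg, Ge, Gt, Ll,
      hs1, hs2, hfgv, hfgvc, hfev, hfevc, hfec, hfecc, hfvc, hfvcc, hftc, hftcc,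
      hftl, hftlc, hfcl, hfclc, hGg, hGe, hGt, hLv, hLl, e1, e2, e3, e4, e5, e6, e7⟩
    rw [abs_le] at hfgvc hfevc hfecc hfvcc hftcc hftlc hfclc
    -- key identity obtained by summing the conservation laws
    have hkey : fev - (θv - θe) = 6.1 * x - Gg - 3 * fec - 3 * ftc := by linarith
    have hLveq : Lv = 2 * Gg + 2 * fev + 2 * fec + 3 * ftc - 6.1 * x := by linarith
    have hW : 0.15 * x ≤ fev - (θv - θe) := by linarith [hfgvc.2, hfecc.2, hftcc.2]
    rcases le_or_gt s 1 with hs | hs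
    · -- low susceptance case: the load at v must be 0
      left
      have ha : θv - θe ≤ 0 := by
        rcases le_or_gt (θv - θe) 0 with h | h
        · exact h
        · exfalso
          have h2 : (s - 1) * (θv - θe) ≤ 0 :=
            mul_nonpos_of_nonpos_of_nonneg (by linarith) h.le
          linarith [h2, hW, hfev, hx]
      have hfevle : fev ≤ -(0.1 * x) := by
        have h3 : (0:ℝ) ≤ (2.5 * s - 1) * (-(θv - θe)) :=
          mul_nonneg (by linarith) (by linarith)
        linarith [h3, hW, hfev]
      linarith [hfgvc.2, hfecc.2, hftcc.2]
    · -- high susceptance case: the load at v must be x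
      right
      have ha : 0 ≤ θv - θe := by
        rcases le_or_gt 0 (θv - θe) with h | h
        · exact h
        · exfalso
          have h2 : (s - 1) * (θv - θe) ≤ 0 :=
            mul_nonpos_of_nonneg_of_nonpos (by linarith) h.le
          linarith [h2, hW, hfev, hx]
      have h1 : fev - (θv - θe) ≤ 0.375 * fev := by
        have h3 : (0:ℝ) ≤ (θv - θe) * (1 - 0.625 * s) :=
          mul_nonneg ha (by linarith)
        linarith [h3, hfev]
      linarith [hfgvc.2, hfecc.2, hftcc.2, hfevc.2]
  · rintro (rfl | rfl)
    · -- witness with load 0 at v : s = 0.4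
      refine ⟨0.4, -x, 0.25*x, -(0.1*x), 0, 0.9*x, 3.45*x, x, -(0.1*x), 0.65*x, 0.9*x,
        x, 3.55*x, 2.55*x, x, 0.55*x, 4.55*x, 6.1*x, ?_, ?_, ?_, ?_, ?_, ?_, ?_, ?_, ?_,
        ?_, ?_, ?_, ?_, ?_, ?_, ?_, ?_, ?_, ?_, ?_, ?_, ?_, ?_, ?_, ?_, ?_, ?_, ?_⟩ <;>
        first
          | (rw [abs_le]; constructor <;> linarith)
          | linarith
    · -- witness with load x at v : s = 1.6
      refine ⟨1.6, -Lv, -(0.25*Lv), -(0.6*Lv), 0, 0.4*Lv, 2.45*Lv, Lv, 0.4*Lv, 0.65*Lv, 0.4*Lv,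
        Lv, 3.05*Lv, 2.05*Lv, Lv, 1.05*Lv, 4.05*Lv, 5.1*Lv, ?_, ?_, ?_, ?_, ?_, ?_, ?_, ?_, ?_,
        ?_, ?_, ?_, ?_, ?_, ?_, ?_, ?_, ?_, ?_, ?_, ?_, ?_, ?_, ?_, ?_, ?_, ?_, ?_⟩ <;>
        first
          | (rw [abs_le]; constructor <;> linarith)
          | linarith
end

section
/- In any feasible solution of the generator FACTS choice network GFCN(x,v), the flow on the edge e–v (oriented from e to v) is at least −0.1x; i.e., if total generation is at least 6.1x then the flow from v to e is at most 0.1x. -/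
/-- In any feasible solution of `GFCN(x,v)` whose total generation is at least `6.1x`,
the flow on the edge `e–v` (oriented from `e` to `v`) is at least `−0.1x`, i.e.
the flow from `v` to `e` is at most `0.1x`. -/
theorem gfcn_ev_flow_lower_bound (x : ℝ) (hx : 0 < x)
    (s θg θe θt θv θc θl fgv fev fec fvc ftc ftl fcl Gg Ge Gt Lv Ll : ℝ)
    (hs1 : 0.4 ≤ s) (hs2 : s ≤ 1.6)
    (h1 : fgv = θv - θg) (h1c : |fgv| ≤ x)
    (h2 : fev = s * (θv - θe)) (h2c : |fev| ≤ 0.4 * x)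
    (h3 : fec = θc - θe) (h3c : |fec| ≤ 0.65 * x)
    (h4 : fvc = θc - θv) (h4c : |fvc| ≤ 0.9 * x)
    (h5 : ftc = θc - θt) (h5c : |ftc| ≤ x)
    (h6 : ftl = θl - θt) (h6c : |ftl| ≤ 3.55 * x)
    (h7 : fcl = θl - θc) (h7c : |fcl| ≤ 2.55 * x)
    (hGg : 0 ≤ Gg) (hGe : 0 ≤ Ge) (hGt : 0 ≤ Gt) (hLv : 0 ≤ Lv) (hLl : 0 ≤ Ll)
    (hkg : fgv = Gg) (hke : fev + fec = Ge) (hkt : ftc + ftl = Gt)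
    (hkv : fvc - fgv - fev = 0 - Lv) (hkc : fcl - fec - fvc - ftc = 0)
    (hkl : -ftl - fcl = 0 - Ll)
    (hgen : 6.1 * x ≤ Gg + Ge + Gt) :
    -(0.1 * x) ≤ fev := by
  have a1 := abs_le.mp h1c
  have a3 := abs_le.mp h3c
  have a5 := abs_le.mp h5c
  have a6 := abs_le.mp h6c
  linarith [a1.2, a3.2, a5.2, a6.2]
end

section
/- In the LDC network of the Hamiltonian-path reduction (graph G with all edges of susceptance 1 and capacity 1, plus generator v₀ adjacent to a, load v_{n+1} adjacent to b, and an auxiliary path of n+1 unit edges from v₀ to v_{n+1}), if the total generation equals 2 then in any feasible solution the phase-angle difference θ(v_{n+1}) − θ(v₀) equals n+1 and θ(b) − θ(a) equals n−1. -/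
open Finset

/-- In the Hamiltonian-path reduction network, if a feasible switched LDC solution has
total generation `2`, then `θ(v_{n+1}) − θ(v₀) = n + 1` and `θ(b) − θ(a) = n − 1`. -/
theorem ham_phase_angles_of_generation_two {n : ℕ} (G : SimpleGraph (Fin n))
    [DecidableRel G.Adj] (a b : Fin n)
    (off : Finset (HamNode n × HamNode n))
    (θ : HamNode n → ℝ) (f : HamNode n × HamNode n → ℝ)
    (gen load : HamNode n → ℝ)
    (hoff : off ⊆ univ.filter (fun e => hamIsEdge G a b e = true))
    (hpl : ∀ e ∈ univ.filter (fun e => hamIsEdge G a b e = true) \ off,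
        f e = θ e.2 - θ e.1 ∧ |f e| ≤ 1)
    (hzero : ∀ e ∉ univ.filter (fun e => hamIsEdge G a b e = true) \ off, f e = 0)
    (hcons : ∀ z : HamNode n,
        (∑ e ∈ univ.filter (fun e => hamIsEdge G a b e = true) \ off,
          ((if e.1 = z then f e else 0) - (if e.2 = z then f e else 0)))
          = gen z - load z)
    (hgen0 : ∀ z, 0 ≤ gen z) (hload0 : ∀ z, 0 ≤ load z)
    (hgsupp : ∀ z, z ≠ Sum.inr 0 → gen z = 0)
    (hlsupp : ∀ z, z ≠ Sum.inr (Fin.last (n + 1)) → load z = 0)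
    (htotal : (∑ z : HamNode n, gen z) = 2) :
    θ (Sum.inr (Fin.last (n + 1))) - θ (Sum.inr 0) = n + 1 ∧
      θ (Sum.inl b) - θ (Sum.inl a) = n - 1 := by
  classical
  -- f vanishes on non-edges
  have hf0 : ∀ e, hamIsEdge G a b e = false → f e = 0 := by
    intro e he
    apply hzero
    simp [he]
  have hfle : ∀ e, |f e| ≤ 1 := by
    intro e
    by_cases h : e ∈ univ.filter (fun e => hamIsEdge G a b e = true) \ off
    · exact (hpl e h).2
    · rw [hzero e h]; norm_num
  have hfθ : ∀ e, f e ≠ 0 → f e = θ e.2 - θ e.1 := by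
    intro e hne
    by_cases h : e ∈ univ.filter (fun e => hamIsEdge G a b e = true) \ off
    · exact (hpl e h).1
    · exact absurd (hzero e h) hne
  -- divergence form of conservation
  have hA : ∀ z : HamNode n,
      (∑ e : HamNode n × HamNode n, if e.1 = z then f e else 0) = ∑ y, f (z, y) := by
    intro z
    rw [Fintype.sum_prod_type]
    have h1 : ∀ x : HamNode n, (∑ y, if x = z then f (x, y) else 0)
        = if x = z then ∑ y, f (x, y) else 0 := by
      intro x; split <;> simp
    rw [Finset.sum_congr rfl (fun x _ => h1 x)]
    simp [Finset.sum_ite_eq']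
  have hB : ∀ z : HamNode n,
      (∑ e : HamNode n × HamNode n, if e.2 = z then f e else 0) = ∑ x, f (x, z) := by
    intro z
    rw [Fintype.sum_prod_type]
    simp [Finset.sum_ite_eq']
  have hdiv : ∀ z : HamNode n,
      (∑ y, f (z, y)) - (∑ x, f (x, z)) = gen z - load z := by
    intro z
    have h1 := hcons z
    have hext : (∑ e ∈ univ.filter (fun e => hamIsEdge G a b e = true) \ off,
          ((if e.1 = z then f e else 0) - if e.2 = z then f e else 0))
        = ∑ e : HamNode n × HamNode n,
          ((if e.1 = z then f e else 0) - if e.2 = z then f e else 0) :=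
      Finset.sum_subset (Finset.subset_univ _) (fun e _ he => by simp [hzero e he])
    rw [hext, Finset.sum_sub_distrib, hA z, hB z] at h1
    exact h1
  -- total load equals total generation
  have hsum0 : (∑ z : HamNode n, (gen z - load z)) = 0 := by
    rw [Finset.sum_congr rfl (fun z _ => (hcons z).symm), Finset.sum_comm]
    apply Finset.sum_eq_zero
    intro e _
    simp [Finset.sum_sub_distrib, Finset.sum_ite_eq]
  have hgen2 : gen (Sum.inr 0 : HamNode n) = 2 := by
    rw [← htotal]
    exact (Fintype.sum_eq_single _ fun z hz => hgsupp z hz).symm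
  have hload2 : load (Sum.inr (Fin.last (n + 1)) : HamNode n) = 2 := by
    have h1 : (∑ z : HamNode n, gen z) - ∑ z : HamNode n, load z = 0 := by
      rw [← Finset.sum_sub_distrib]; exact hsum0
    have h2 : (∑ z : HamNode n, load z) = load (Sum.inr (Fin.last (n + 1))) :=
      Fintype.sum_eq_single _ fun z hz => hlsupp z hz
    rw [htotal, h2] at h1
    linarith
  -- conservation at the generator v₀
  have hin0 : (∑ x : HamNode n, f (x, Sum.inr 0)) = 0 := by
    apply Finset.sum_eq_zero
    intro x _
    apply hf0
    rcases x with i | i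
    · simp [hamIsEdge, Fin.ext_iff]
    · simp [hamIsEdge]
  have hout0 : (∑ y : HamNode n, f (Sum.inr 0, y))
      = f (Sum.inr 0, Sum.inl a) + f (Sum.inr 0, Sum.inr 1) := by
    rw [Fintype.sum_sum_type]
    congr 1
    · refine Finset.sum_eq_single a (fun j _ hj => hf0 _ ?_) (by simp)
      simp [hamIsEdge, hj]
    · refine Finset.sum_eq_single 1 (fun j _ hj => hf0 _ ?_) (by simp)
      simp only [ne_eq, Fin.ext_iff] at hj
      simp only [Fin.val_one] at hj
      simp [hamIsEdge, hj]
  have key2 : ∀ x y : ℝ, |x| ≤ 1 → |y| ≤ 1 → x + y = 2 → x = 1 ∧ y = 1 := by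
    intro x y hx hy hxy
    rw [abs_le] at hx hy
    constructor <;> linarith [hx.1, hx.2, hy.1, hy.2]
  have hload0' : load (Sum.inr 0 : HamNode n) = 0 := by
    apply hlsupp
    simp [Fin.ext_iff]
  have hcons0 := hdiv (Sum.inr 0)
  rw [hout0, hin0, hgen2, hload0'] at hcons0
  have hfa : f (Sum.inr 0, Sum.inl a) = 1 ∧ f (Sum.inr 0, Sum.inr 1) = 1 :=
    key2 _ _ (hfle _) (hfle _) (by linarith)
  have hθa : θ (Sum.inl a) - θ (Sum.inr 0 : HamNode n) = 1 := by
    have h := hfθ (Sum.inr 0, Sum.inl a) (by rw [hfa.1]; norm_num)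
    rw [hfa.1] at h
    exact h.symm
  -- flow along the auxiliary path
  have hpath : ∀ k, ∀ h : k + 1 < n + 2,
      f (Sum.inr ⟨k, Nat.lt_of_succ_lt h⟩, Sum.inr ⟨k + 1, h⟩) = 1 := by
    intro k
    induction k with
    | zero =>
      intro h
      have e0 : (⟨0, Nat.lt_of_succ_lt h⟩ : Fin (n + 2)) = 0 := by
        rw [Fin.ext_iff]; simp
      have e1 : (⟨1, h⟩ : Fin (n + 2)) = 1 := by
        rw [Fin.ext_iff]; simp
      rw [e0, e1]
      exact hfa.2
    | succ k ih =>
      intro h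
      have hk1 : k + 1 < n + 2 := Nat.lt_of_succ_lt h
      have ihv := ih hk1
      have hd := hdiv (Sum.inr ⟨k + 1, hk1⟩)
      have hg : gen (Sum.inr ⟨k + 1, hk1⟩ : HamNode n) = 0 := by
        apply hgsupp; simp [Fin.ext_iff]
      have hl : load (Sum.inr ⟨k + 1, hk1⟩ : HamNode n) = 0 := by
        apply hlsupp
        simp only [ne_eq, Sum.inr.injEq, Fin.ext_iff, Fin.val_last]
        omega
      have hout : (∑ y : HamNode n, f (Sum.inr ⟨k + 1, hk1⟩, y))
          = f (Sum.inr ⟨k + 1, hk1⟩, Sum.inr ⟨k + 2, h⟩) := by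
        rw [Fintype.sum_sum_type]
        have h1 : (∑ j : Fin n, f (Sum.inr ⟨k + 1, hk1⟩, Sum.inl j)) = 0 := by
          apply Finset.sum_eq_zero
          intro j _
          apply hf0
          simp [hamIsEdge, Fin.ext_iff]
        have h2 : (∑ j : Fin (n + 2), f (Sum.inr ⟨k + 1, hk1⟩, Sum.inr j))
            = f (Sum.inr ⟨k + 1, hk1⟩, Sum.inr ⟨k + 2, h⟩) := by
          refine Finset.sum_eq_single _ (fun j _ hj => hf0 _ ?_) (by simp)
          simp only [ne_eq, Fin.ext_iff] at hj
          simp only [hamIsEdge, decide_eq_false_iff_not]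
          omega
        rw [h1, h2]; ring
      have hin : (∑ x : HamNode n, f (x, Sum.inr ⟨k + 1, hk1⟩)) = 1 := by
        rw [Fintype.sum_sum_type]
        have h1 : (∑ j : Fin n, f (Sum.inl j, Sum.inr ⟨k + 1, hk1⟩)) = 0 := by
          apply Finset.sum_eq_zero
          intro j _
          apply hf0
          simp only [hamIsEdge, decide_eq_false_iff_not, not_and, Fin.ext_iff, Fin.val_last]
          intro _
          omega
        have h2 : (∑ j : Fin (n + 2), f (Sum.inr j, Sum.inr ⟨k + 1, hk1⟩))
            = f (Sum.inr ⟨k, Nat.lt_of_succ_lt hk1⟩, Sum.inr ⟨k + 1, hk1⟩) := by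
          refine Finset.sum_eq_single _ (fun j _ hj => hf0 _ ?_) (by simp)
          simp only [ne_eq, Fin.ext_iff] at hj
          simp only [hamIsEdge, decide_eq_false_iff_not]
          omega
        rw [h1, h2, ihv]; ring
      rw [hout, hin, hg, hl] at hd
      have : f (Sum.inr ⟨k + 1, hk1⟩, Sum.inr ⟨k + 2, h⟩) = 1 := by linarith
      exact this
  -- telescoping phase angles along the path
  have hθtel : ∀ k, ∀ h : k < n + 2,
      θ (Sum.inr ⟨k, h⟩ : HamNode n) - θ (Sum.inr 0) = (k : ℝ) := by
    intro k
    induction k with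
    | zero =>
      intro h
      have e0 : (⟨0, h⟩ : Fin (n + 2)) = 0 := by rw [Fin.ext_iff]; simp
      rw [e0]; simp
    | succ k ih =>
      intro h
      have hk : k < n + 2 := Nat.lt_of_succ_lt h
      have h1 := hpath k h
      have h2 := hfθ _ (by rw [h1]; norm_num)
      rw [h1] at h2
      have h3 : θ (Sum.inr ⟨k + 1, h⟩ : HamNode n) - θ (Sum.inr ⟨k, hk⟩) = 1 := by
        have h2' : (1 : ℝ) = θ (Sum.inr ⟨k + 1, h⟩ : HamNode n) - θ (Sum.inr ⟨k, hk⟩) := h2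
        linarith
      have h4 := ih hk
      push_cast
      linarith
  have hθlast : θ (Sum.inr (Fin.last (n + 1)) : HamNode n) - θ (Sum.inr 0) = (n : ℝ) + 1 := by
    have h1 := hθtel (n + 1) (by omega)
    have : (Fin.last (n + 1)) = (⟨n + 1, by omega⟩ : Fin (n + 2)) := rfl
    rw [this]
    push_cast at h1
    linarith
  -- conservation at the load v_{n+1}
  have houtL : (∑ y : HamNode n, f (Sum.inr (Fin.last (n + 1)), y)) = 0 := by
    apply Finset.sum_eq_zero
    intro y _
    apply hf0
    rcases y with j | j
    · simp [hamIsEdge, Fin.ext_iff]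
    · simp only [hamIsEdge, decide_eq_false_iff_not, Fin.val_last]
      omega
  have hinL : (∑ x : HamNode n, f (x, Sum.inr (Fin.last (n + 1))))
      = f (Sum.inl b, Sum.inr (Fin.last (n + 1)))
        + f (Sum.inr ⟨n, by omega⟩, Sum.inr (Fin.last (n + 1))) := by
    rw [Fintype.sum_sum_type]
    congr 1
    · refine Finset.sum_eq_single b (fun j _ hj => hf0 _ ?_) (by simp)
      simp [hamIsEdge, hj]
    · refine Finset.sum_eq_single _ (fun j _ hj => hf0 _ ?_) (by simp)
      simp only [ne_eq, Fin.ext_iff] at hj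
      simp only [hamIsEdge, decide_eq_false_iff_not, Fin.val_last]
      omega
  have hgL : gen (Sum.inr (Fin.last (n + 1)) : HamNode n) = 0 := by
    apply hgsupp
    simp [Fin.ext_iff, Fin.last]
  have hconsL := hdiv (Sum.inr (Fin.last (n + 1)))
  rw [houtL, hinL, hgL, hload2] at hconsL
  have hfb : f (Sum.inl b, Sum.inr (Fin.last (n + 1))) = 1 ∧
      f (Sum.inr ⟨n, by omega⟩, Sum.inr (Fin.last (n + 1))) = 1 :=
    key2 _ _ (hfle _) (hfle _) (by linarith)
  have hθb : θ (Sum.inr (Fin.last (n + 1)) : HamNode n) - θ (Sum.inl b) = 1 := by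
    have h := hfθ (Sum.inl b, Sum.inr (Fin.last (n + 1))) (by rw [hfb.1]; norm_num)
    rw [hfb.1] at h
    exact h.symm
  refine ⟨hθlast, ?_⟩
  linarith [hθlast, hθb, hθa]
end

section
/- Suppose in the GSCN(x,v) network (generator g; load l; node v; edges g–v capacity x, g–l capacity 2x, v–l capacity x, all susceptance 1) the total generation at g equals 3x in a feasible switched LDC solution with v a load. Then neither edge g–v nor g–l is switched off, both carry flow exactly at capacity, and either the edge v–l is switched off (in which case the load at v is x), or the edge v–l carries flow x from v to l (in which case the load at v is 0). -/
/-- If in a feasible switched LDC solution of `GSCN(x,v)` (with `v` a load) the total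
generation at `g` equals `3x`, then neither `g–v` nor `g–l` is switched off, both carry
flow exactly at capacity, and either `v–l` is switched off and the load at `v` is `x`,
or `v–l` carries flow `x` from `v` to `l` and the load at `v` is `0`. -/
theorem gscn_optimal_structure (x : ℝ) (hx : 0 < x)
    (bgv bgl bvl : Bool) (θg θv θl fgv fgl fvl Lv Ll : ℝ)
    (hgv : if bgv then fgv = θv - θg ∧ |fgv| ≤ x else fgv = 0)
    (hgl : if bgl then fgl = θl - θg ∧ |fgl| ≤ 2 * x else fgl = 0)
    (hvl : if bvl then fvl = θl - θv ∧ |fvl| ≤ x else fvl = 0)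
    (hLv : 0 ≤ Lv) (hLl : 0 ≤ Ll)
    (hkg : fgv + fgl = 3 * x)
    (hkv : fvl - fgv = 0 - Lv)
    (hkl : -fgl - fvl = 0 - Ll) :
    bgv = true ∧ bgl = true ∧ fgv = x ∧ fgl = 2 * x ∧
      ((bvl = false ∧ Lv = x) ∨ (bvl = true ∧ fvl = x ∧ Lv = 0)) := by
  cases bgv with
  | false =>
    simp only [if_neg, Bool.false_eq_true, if_false] at hgv
    cases bgl with
    | false =>
      simp only [Bool.false_eq_true, if_false] at hgl
      exfalso; nlinarith
    | true =>
      simp only [if_true] at hgl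
      obtain ⟨hgl1, hgl2⟩ := hgl
      rw [abs_le] at hgl2
      exfalso; nlinarith [hgl2.2]
  | true =>
    simp only [if_true] at hgv
    obtain ⟨hgv1, hgv2⟩ := hgv
    rw [abs_le] at hgv2
    cases bgl with
    | false =>
      simp only [Bool.false_eq_true, if_false] at hgl
      exfalso; nlinarith [hgv2.2]
    | true =>
      simp only [if_true] at hgl
      obtain ⟨hgl1, hgl2⟩ := hgl
      rw [abs_le] at hgl2
      have h1 : fgv = x := by nlinarith [hgv2.2, hgl2.2]
      have h2 : fgl = 2 * x := by nlinarith [hgv2.2, hgl2.2]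
      refine ⟨rfl, rfl, h1, h2, ?_⟩
      cases bvl with
      | false =>
        simp only [Bool.false_eq_true, if_false] at hvl
        left; exact ⟨rfl, by linarith⟩
      | true =>
        simp only [if_true] at hvl
        obtain ⟨hvl1, _⟩ := hvl
        right
        have hf : fvl = x := by
          rw [hvl1]; rw [h1] at hgv1; rw [h2] at hgl1; linarith
        exact ⟨rfl, hf, by linarith⟩
end

section
/- In any LDC feasible solution of the exact-cover reduction network N(M,S) achieving total generation 3 + 18.3|S| + |M|, normalizing θ(g) = 0 forces θ(l) = 3 and θ(x) = 1 for every x ∈ M; consequently each edge x–l (susceptance 1, capacity 2) carries flow exactly 2, and there is no flow between any two distinct element-nodes x₁, x₂ ∈ M. -/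
open Finset

/-- Exact-cover reduction network `N(M,S)` (proof of Theorem 1).  Elements of `M` are
the inhabitants of the finite type `α`; `S` is a collection of 3-element subsets.
The network has generator `g`, load `l`, a node for each element `x`, a connector
`v_X` for each `X ∈ S`, and a disjoint `GFCN(3, v_X)` gadget (nodes `g_X, e_X, t_X,
c_X, l_X`; generators `g_X, e_X, t_X`, load `l_X`).  Edges: `g–l` (sus 1, cap 3),
`g–x` (1, 1), `x–l` (1, 2), `v_X–x` (1, 1) for `x ∈ X`, and gadget edges
`g_X–v_X` (1, 3), `e_X–v_X` (sus in [0.4,1.6], cap 1.2), `e_X–c_X` (1, 1.95),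
`v_X–c_X` (1, 2.7), `t_X–c_X` (1, 3), `t_X–l_X` (1, 10.65), `c_X–l_X` (1, 7.65).
In any feasible solution achieving total generation `3 + 18.3·|S| + |M|`,
normalizing `θ(g) = 0` forces `θ(l) = 3` and `θ(x) = 1` for every element `x`;
consequently each edge `x–l` carries flow exactly `2`, and there is no flow between
any two element nodes (their phase-angle difference, hence any LDC flow between them,
vanishes). -/

private lemma gadget_bound (s ggv gev gec gvc gtc gtl gcl : ℝ)
    (hs1 : 0.4 ≤ s) (hs2 : s ≤ 1.6)
    (h1 : |ggv| ≤ 3) (h2 : |gev| ≤ 1.2) (h3 : |gec| ≤ 1.95)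
    (h4 : |gvc| ≤ 2.7) (h5 : |gtc| ≤ 3)
    (he : gev = s * (gec - gvc)) (hl : gtl = gtc + gcl)
    (hc : gcl = gvc + gec + gtc) :
    ggv + (gev + gec) + (gtc + gtl) ≤ 18.3 := by
  have h1' := abs_le.mp h1
  have h2' := abs_le.mp h2
  have h3' := abs_le.mp h3
  have h4' := abs_le.mp h4
  have h5' := abs_le.mp h5
  rcases le_or_gt s 1 with h | h
  · nlinarith [mul_nonneg (by linarith : (0:ℝ) ≤ 1.95 - gec) (by linarith : (0:ℝ) ≤ s + 2),
      mul_nonneg (by linarith : (0:ℝ) ≤ 2.7 - gvc) (by linarith : (0:ℝ) ≤ 1 - s)]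
  · nlinarith [mul_nonneg (by linarith : (0:ℝ) ≤ 1.2 - gev) (by linarith : (0:ℝ) ≤ s - 1),
      mul_nonneg (by linarith : (0:ℝ) ≤ 1.95 - gec) (by linarith : (0:ℝ) ≤ s)]

/-- main -/
theorem exact_cover_optimal_phase_angles
    {α : Type} [Fintype α] [DecidableEq α]
    (S : Finset (Finset α)) (hS : ∀ X ∈ S, X.card = 3)
    (θg θl : ℝ) (θx : α → ℝ) (θgad : {X // X ∈ S} → Fin 6 → ℝ)
    -- θgad X 0 is the angle at the connector v_X; 1,2,3,4,5 are g_X,e_X,t_X,c_X,l_X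
    (fgl : ℝ) (fgx fxl : α → ℝ) (fvx : {X // X ∈ S} → α → ℝ)
    (sev ggv gev gec gvc gtc gtl gcl : {X // X ∈ S} → ℝ)
    (Gg Ll : ℝ) (Gga Gge Ggt Lgad : {X // X ∈ S} → ℝ)
    (hgl : fgl = θl - θg ∧ |fgl| ≤ 3)
    (hgx : ∀ x, fgx x = θx x - θg ∧ |fgx x| ≤ 1)
    (hxl : ∀ x, fxl x = θl - θx x ∧ |fxl x| ≤ 2)
    (hvx : ∀ X : {X // X ∈ S}, ∀ x ∈ X.val,
        fvx X x = θx x - θgad X 0 ∧ |fvx X x| ≤ 1)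
    (hvx0 : ∀ X : {X // X ∈ S}, ∀ x ∉ X.val, fvx X x = 0)
    (hsev : ∀ X, 0.4 ≤ sev X ∧ sev X ≤ 1.6)
    (hggv : ∀ X, ggv X = θgad X 0 - θgad X 1 ∧ |ggv X| ≤ 3)
    (hgev : ∀ X, gev X = sev X * (θgad X 0 - θgad X 2) ∧ |gev X| ≤ 1.2)
    (hgec : ∀ X, gec X = θgad X 4 - θgad X 2 ∧ |gec X| ≤ 1.95)
    (hgvc : ∀ X, gvc X = θgad X 4 - θgad X 0 ∧ |gvc X| ≤ 2.7)
    (hgtc : ∀ X, gtc X = θgad X 4 - θgad X 3 ∧ |gtc X| ≤ 3)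
    (hgtl : ∀ X, gtl X = θgad X 5 - θgad X 3 ∧ |gtl X| ≤ 10.65)
    (hgcl : ∀ X, gcl X = θgad X 5 - θgad X 4 ∧ |gcl X| ≤ 7.65)
    (hGg : 0 ≤ Gg) (hLl : 0 ≤ Ll)
    (hgadnn : ∀ X, 0 ≤ Gga X ∧ 0 ≤ Gge X ∧ 0 ≤ Ggt X ∧ 0 ≤ Lgad X)
    -- Kirchhoff's conservation law at every node:
    (hkg : fgl + ∑ x : α, fgx x = Gg)
    (hkl : fgl + ∑ x : α, fxl x = Ll)
    (hkx : ∀ x : α, fgx x + (∑ X : {X // X ∈ S}, fvx X x) - fxl x = 0)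
    (hkv : ∀ X : {X // X ∈ S},
        ggv X + gev X - gvc X - ∑ x ∈ X.val, fvx X x = 0)
    (hkgg : ∀ X, ggv X = Gga X)
    (hkge : ∀ X, gev X + gec X = Gge X)
    (hkgt : ∀ X, gtc X + gtl X = Ggt X)
    (hkgc : ∀ X, gvc X + gec X + gtc X - gcl X = 0)
    (hkgl : ∀ X, gtl X + gcl X = Lgad X)
    (hnorm : θg = 0)
    (htotal : Gg + ∑ X : {X // X ∈ S}, (Gga X + Gge X + Ggt X)
        = 3 + 18.3 * S.card + Fintype.card α) :
    θl = 3 ∧ (∀ x : α, θx x = 1) ∧ (∀ x : α, fxl x = 2) ∧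
      (∀ x₁ x₂ : α, x₁ ≠ x₂ → θx x₁ - θx x₂ = 0) := by
  subst hnorm
  -- Each gadget generates at most 18.3.
  have hgad : ∀ X : {X // X ∈ S}, Gga X + Gge X + Ggt X ≤ 18.3 := by
    intro X
    have e1 := hggv X; have e2 := hgev X; have e3 := hgec X
    have e4 := hgvc X; have e5 := hgtc X; have e6 := hgtl X; have e7 := hgcl X
    have hb := gadget_bound (sev X) (ggv X) (gev X) (gec X) (gvc X) (gtc X) (gtl X) (gcl X)
      (hsev X).1 (hsev X).2 e1.2 e2.2 e3.2 e4.2 e5.2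
      (by rw [e2.1, e3.1, e4.1]; ring)
      (by rw [e6.1, e5.1, e7.1]; ring)
      (by have := hkgc X; linarith)
    have g1 := hkgg X; have g2 := hkge X; have g3 := hkgt X
    linarith
  have hsum : ∑ X : {X // X ∈ S}, (Gga X + Gge X + Ggt X) ≤ 18.3 * S.card := by
    calc ∑ X : {X // X ∈ S}, (Gga X + Gge X + Ggt X)
        ≤ ∑ _X : {X // X ∈ S}, (18.3:ℝ) := Finset.sum_le_sum fun X _ => hgad X
      _ = 18.3 * S.card := by
          rw [Finset.sum_const, Finset.card_univ, Fintype.card_coe, nsmul_eq_mul, mul_comm]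
  have hfgx_le : ∀ x, fgx x ≤ 1 := fun x => (abs_le.mp (hgx x).2).2
  have hfgl_le : fgl ≤ 3 := (abs_le.mp hgl.2).2
  have hsumfgx : ∑ x : α, fgx x ≤ (Fintype.card α : ℝ) := by
    calc ∑ x : α, fgx x ≤ ∑ _x : α, (1:ℝ) := Finset.sum_le_sum fun x _ => hfgx_le x
      _ = Fintype.card α := by simp
  -- total generation forces Gg = 3 + |α|, hence fgl = 3 and each fgx = 1
  have hGg_ge : 3 + (Fintype.card α : ℝ) ≤ Gg := by linarith
  have hfgl3 : fgl = 3 := by linarith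
  have hsumfgx_eq : ∑ x : α, fgx x = (Fintype.card α : ℝ) := by linarith
  have hfgx1 : ∀ x : α, fgx x = 1 := by
    by_contra hcon
    push_neg at hcon
    obtain ⟨x0, hx0⟩ := hcon
    have hlt : fgx x0 < 1 := lt_of_le_of_ne (hfgx_le x0) hx0
    have : ∑ x : α, fgx x < ∑ _x : α, (1:ℝ) :=
      Finset.sum_lt_sum (fun x _ => hfgx_le x) ⟨x0, Finset.mem_univ x0, hlt⟩
    rw [hsumfgx_eq] at this
    simp at this
  have hθl : θl = 3 := by have := hgl.1; linarith
  have hθx : ∀ x : α, θx x = 1 := by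
    intro x
    have := (hgx x).1
    have := hfgx1 x
    linarith
  refine ⟨hθl, hθx, fun x => ?_, fun x₁ x₂ _ => by rw [hθx x₁, hθx x₂]; ring⟩
  have := (hxl x).1
  rw [hθl, hθx x] at this
  linarith
end
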